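/- arXiv:1104.1604 — 6 statements merged into one kernel-verified Lean document; each statement's English description precedes it below -/
import Mathlib

section
/- For a probability measure μ on ℝ with finite second moment, mean 0 and variance σ², the reciprocal Cauchy transform F_μ(z) = 1/G_μ(z), where G_μ(z) = ∫ (z-t)⁻¹ dμ(t), satisfies |F_μ(z) - z| ≤ C / Im(z) for all z in the upper half-plane, where C > 0 is a constant depending only on μ. -/
open MeasureTheory Filter Topology

/-- The Cauchy transform of a measure on ℝ. -/
noncomputable def cauchyG (μ : Measure ℝ) (z : ℂ) : ℂ := ∫ t, (z - (t : ℂ))⁻¹ ∂μ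

/-- The reciprocal Cauchy transform. -/
noncomputable def Frec (μ : Measure ℝ) (z : ℂ) : ℂ := (cauchyG μ z)⁻¹

set_option maxHeartbeats 1600000 in
theorem stmt0 (μ : Measure ℝ) [IsProbabilityMeasure μ]
    (h2 : Integrable (fun t => t ^ 2) μ)
    (hmean : ∫ t, t ∂μ = 0) (σ : ℝ) (hvar : ∫ t, t ^ 2 ∂μ = σ ^ 2) :
    ∃ C > 0, ∀ z : ℂ, 0 < z.im →
      ‖Frec μ z - z‖ ≤ C / z.im := by
  set s : ℝ := σ ^ 2 + 1 with hs
  have hspos : 0 < s := by positivity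
  refine ⟨2 * s, by positivity, ?_⟩
  intro z hy
  set y := z.im with hydef
  -- basic nonvanishing
  have hzt : ∀ t : ℝ, z - (t : ℂ) ≠ 0 := by
    intro t h
    have : (z - (t : ℂ)).im = 0 := by rw [h]; simp
    simp only [Complex.sub_im, Complex.ofReal_im, sub_zero] at this
    exact absurd this (ne_of_gt hy)
  have hz0 : z ≠ 0 := by
    intro h; rw [hydef, h] at hy; simp at hy
  -- norm bound on the kernel
  have hker : ∀ t : ℝ, ‖(z - (t : ℂ))⁻¹‖ ≤ y⁻¹ := by
    intro t
    rw [norm_inv]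
    apply inv_anti₀ hy
    calc y = |(z - (t : ℂ)).im| := by
              simp [abs_of_pos hy]
              rw [← hydef, abs_of_pos hy]
      _ ≤ ‖z - (t : ℂ)‖ := Complex.abs_im_le_norm _
  have hkerpos : ∀ t : ℝ, 0 < ‖(z - (t : ℂ))⁻¹‖ := fun t => by
    simpa using norm_pos_iff.mpr (inv_ne_zero (hzt t))
  -- continuity / measurability
  have contG : Continuous fun t : ℝ => (z - (t : ℂ))⁻¹ :=
    (continuous_const.sub Complex.continuous_ofReal).inv₀ hzt
  -- integrabilities
  have intG : Integrable (fun t : ℝ => (z - (t : ℂ))⁻¹) μ := by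
    refine (integrable_const (y⁻¹)).mono' contG.aestronglyMeasurable ?_
    filter_upwards with t
    exact hker t
  have intt : Integrable (fun t : ℝ => t) μ := by
    refine ((integrable_const (1:ℝ)).add h2).mono' aestronglyMeasurable_id ?_
    filter_upwards with t
    have : |t| ≤ 1 + t ^ 2 := by nlinarith [sq_nonneg (|t| - 1), sq_abs t]
    simpa using this
  have intN : Integrable (fun t : ℝ => (t : ℂ) * (z - (t : ℂ))⁻¹) μ := by
    refine (intt.abs.const_mul y⁻¹).mono'
      ((Complex.continuous_ofReal.mul contG).aestronglyMeasurable) ?_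
    filter_upwards with t
    rw [norm_mul, Complex.norm_real]
    calc ‖t‖ * ‖(z - (t:ℂ))⁻¹‖ ≤ |t| * y⁻¹ := by
          apply mul_le_mul_of_nonneg_left (hker t) (abs_nonneg t)
      _ = y⁻¹ * |t| := mul_comm _ _
  have intA : Integrable (fun t : ℝ => ‖(z - (t : ℂ))⁻¹‖ ^ 2) μ := by
    refine (integrable_const (y⁻¹ ^ 2)).mono' ((contG.norm.pow 2).aestronglyMeasurable) ?_
    filter_upwards with t
    have h1 := hker t
    have h0 := (hkerpos t).le
    simp only [norm_pow, Real.norm_eq_abs, abs_norm]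
    exact pow_le_pow_left₀ h0 h1 2
  have intM : Integrable (fun t : ℝ => (t : ℂ) ^ 2 * (z - (t : ℂ))⁻¹) μ := by
    refine (h2.const_mul y⁻¹).mono'
      (((Complex.continuous_ofReal.pow 2).mul contG).aestronglyMeasurable) ?_
    filter_upwards with t
    rw [norm_mul, norm_pow, Complex.norm_real]
    calc ‖t‖ ^ 2 * ‖(z - (t:ℂ))⁻¹‖ ≤ t ^ 2 * y⁻¹ := by
          rw [Real.norm_eq_abs, sq_abs]
          exact mul_le_mul_of_nonneg_left (hker t) (sq_nonneg t)
      _ = y⁻¹ * t ^ 2 := mul_comm _ _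
  -- the quantities
  set G : ℂ := cauchyG μ z with hGdef
  set A : ℝ := ∫ t, ‖(z - (t : ℂ))⁻¹‖ ^ 2 ∂μ with hAdef
  set N : ℂ := ∫ t, (t : ℂ) * (z - (t : ℂ))⁻¹ ∂μ with hNdef
  -- A > 0
  have hApos : 0 < A := by
    rw [hAdef]
    refine (integral_pos_iff_support_of_nonneg (fun t => by positivity) intA).mpr ?_
    have : (Function.support fun t : ℝ => ‖(z - (t : ℂ))⁻¹‖ ^ 2) = Set.univ := by
      ext t; simp only [Function.mem_support, Set.mem_univ, iff_true]
      exact ne_of_gt (pow_pos (hkerpos t) 2)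
    rw [this]
    simp
  -- imaginary part of G
  have hGim : G.im = -(y * A) := by
    have him := integral_im (𝕜 := ℂ) intG
    simp only [RCLike.im_eq_complex_im] at him
    rw [hGdef, cauchyG, ← him]
    rw [hAdef, ← integral_const_mul, ← integral_neg]
    congr 1; ext t
    rw [Complex.inv_im]
    have him2 : (z - (t : ℂ)).im = y := by rw [hydef]; simp
    have hnsq : Complex.normSq (z - (t : ℂ)) = ‖z - (t:ℂ)‖ ^ 2 := by
      rw [Complex.normSq_eq_norm_sq]
    rw [him2, hnsq]
    have hne : ‖z - (t:ℂ)‖ ≠ 0 := norm_ne_zero_iff.mpr (hzt t)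
    field_simp
    rw [one_div, norm_inv, inv_pow, mul_inv_cancel₀ (pow_ne_zero 2 hne)]
  have hGnorm : y * A ≤ ‖G‖ := by
    calc y * A = |G.im| := by rw [hGim, abs_neg, abs_of_nonneg (mul_nonneg hy.le hApos.le)]
      _ ≤ ‖G‖ := Complex.abs_im_le_norm G
  have hGpos : 0 < ‖G‖ := lt_of_lt_of_le (mul_pos hy hApos) hGnorm
  have hG0 : G ≠ 0 := norm_pos_iff.mp hGpos
  -- z * G = 1 + N
  have hzG : z * G = 1 + N := by
    rw [hGdef, cauchyG, ← integral_const_mul]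
    have : ∀ t : ℝ, z * (z - (t : ℂ))⁻¹ = 1 + (t : ℂ) * (z - (t : ℂ))⁻¹ := by
      intro t
      rw [eq_comm, add_comm]
      field_simp [hzt t]
      ring
    simp_rw [this]
    rw [integral_add (integrable_const 1) intN]
    congr 1
    simp
  -- F - z = -N / G
  have hF : Frec μ z - z = -N / G := by
    rw [Frec, ← hGdef, eq_div_iff hG0, sub_mul, inv_mul_cancel₀ hG0]
    linear_combination -hzG
  -- Bound 2 : ‖N‖ * ‖z‖ ≤ σ^2 / y
  have hM : ‖∫ t, (t : ℂ) ^ 2 * (z - (t : ℂ))⁻¹ ∂μ‖ ≤ σ ^ 2 / y := by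
    calc ‖∫ t, (t : ℂ) ^ 2 * (z - (t : ℂ))⁻¹ ∂μ‖
        ≤ ∫ t, ‖(t : ℂ) ^ 2 * (z - (t : ℂ))⁻¹‖ ∂μ := norm_integral_le_integral_norm _
      _ ≤ ∫ t, t ^ 2 * y⁻¹ ∂μ := by
          refine integral_mono intM.norm (h2.mul_const _) fun t => ?_
          rw [norm_mul, norm_pow, Complex.norm_real, Real.norm_eq_abs, sq_abs]
          exact mul_le_mul_of_nonneg_left (hker t) (sq_nonneg t)
      _ = σ ^ 2 / y := by rw [integral_mul_const, hvar]; ring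
  have hNz : ‖N‖ * ‖z‖ ≤ σ ^ 2 / y := by
    have hsplit : ∀ t : ℝ, (t : ℂ) * (z - (t : ℂ))⁻¹
        = z⁻¹ * (t : ℂ) + z⁻¹ * ((t : ℂ) ^ 2 * (z - (t : ℂ))⁻¹) := by
      intro t
      have h1 := hzt t
      field_simp
      ring
    have e1 : ∫ t, ((t : ℝ) : ℂ) ∂μ = 0 := by
      have h := Complex.ofRealCLM.integral_comp_comm intt
      simp only [Complex.ofRealCLM_apply] at h
      rw [h, hmean, Complex.ofReal_zero]
    have inttC : Integrable (fun t : ℝ => (t : ℂ)) μ := by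
      refine intt.abs.mono' Complex.continuous_ofReal.aestronglyMeasurable ?_
      filter_upwards with t
      simp
    have hNM : N = z⁻¹ * ∫ t, (t : ℂ) ^ 2 * (z - (t : ℂ))⁻¹ ∂μ := by
      rw [hNdef]
      calc ∫ t, (t : ℂ) * (z - (t : ℂ))⁻¹ ∂μ
          = ∫ t, (z⁻¹ * (t : ℂ) + z⁻¹ * ((t : ℂ) ^ 2 * (z - (t : ℂ))⁻¹)) ∂μ :=
            integral_congr_ae (Filter.Eventually.of_forall fun t => hsplit t)
        _ = z⁻¹ * (∫ t, ((t : ℝ) : ℂ) ∂μ)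
              + z⁻¹ * ∫ t, (t : ℂ) ^ 2 * (z - (t : ℂ))⁻¹ ∂μ := by
            rw [integral_add (inttC.const_mul z⁻¹) (intM.const_mul z⁻¹),
              integral_const_mul, integral_const_mul]
        _ = z⁻¹ * ∫ t, (t : ℂ) ^ 2 * (z - (t : ℂ))⁻¹ ∂μ := by rw [e1]; ring
    rw [hNM, norm_mul, norm_inv]
    have hznorm : 0 < ‖z‖ := norm_pos_iff.mpr hz0
    calc ‖z‖⁻¹ * ‖∫ t, (t : ℂ) ^ 2 * (z - (t : ℂ))⁻¹ ∂μ‖ * ‖z‖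
        = ‖∫ t, (t : ℂ) ^ 2 * (z - (t : ℂ))⁻¹ ∂μ‖ := by
          rw [mul_comm, ← mul_assoc, mul_inv_cancel₀ (ne_of_gt hznorm), one_mul]
      _ ≤ σ ^ 2 / y := hM
  -- Bound 1 : ‖N‖ ≤ 1/4 + s * A
  have hN1 : ‖N‖ ≤ 1 / 4 + s * A := by
    calc ‖N‖ ≤ ∫ t, ‖(t : ℂ) * (z - (t : ℂ))⁻¹‖ ∂μ := norm_integral_le_integral_norm _
      _ ≤ ∫ t, (t ^ 2 / (4 * s) + s * ‖(z - (t : ℂ))⁻¹‖ ^ 2) ∂μ := by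
          refine integral_mono intN.norm ((h2.div_const _).add (intA.const_mul s)) fun t => ?_
          rw [norm_mul, Complex.norm_real, Real.norm_eq_abs]
          have hb := (hkerpos t).le
          rw [div_add' _ _ _ (by positivity : (4:ℝ) * s ≠ 0), le_div_iff₀ (by positivity)]
          nlinarith [sq_nonneg (|t| - 2 * s * ‖(z - (t : ℂ))⁻¹‖), sq_abs t, hspos,
            abs_nonneg t, hb]
      _ ≤ 1 / 4 + s * A := by
          rw [integral_add (h2.div_const _) (intA.const_mul s), integral_div,
            integral_const_mul, hvar, ← hAdef]
          have : σ ^ 2 / (4 * s) ≤ 1 / 4 := by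
            rw [div_le_div_iff₀ (by positivity) (by norm_num)]
            nlinarith
          linarith [this]
  -- final assembly
  clear_value s y G A N
  clear hzt hker hkerpos contG intG intt intN intA intM hGim hApos hmean hvar h2 hGdef hAdef hNdef hydef
  have habs : ‖Frec μ z - z‖ = ‖N‖ / ‖G‖ := by
    rw [hF, norm_div, norm_neg]
  rw [habs, div_le_div_iff₀ hGpos hy]
  by_cases hcase : ‖N‖ ≤ 1 / 2
  · -- small N : use the mean-zero bound
    have hone : (1 : ℝ) ≤ ‖(1 : ℂ) + N‖ + ‖N‖ := by
      calc (1 : ℝ) = ‖(1 : ℂ) + N + -N‖ := by norm_num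
        _ ≤ ‖(1 : ℂ) + N‖ + ‖-N‖ := norm_add_le _ _
        _ = ‖(1 : ℂ) + N‖ + ‖N‖ := by rw [norm_neg]
    have hGz : ‖G‖ * ‖z‖ = ‖(1 : ℂ) + N‖ := by
      rw [mul_comm, ← norm_mul, hzG]
    have h1 : 1 / 2 ≤ ‖G‖ * ‖z‖ := by rw [hGz]; linarith
    have hzpos : 0 < ‖z‖ := norm_pos_iff.mpr hz0
    have hNzy : ‖N‖ * ‖z‖ * y ≤ σ ^ 2 := (le_div_iff₀ hy).mp hNz
    nlinarith [hNzy, hzpos, hspos, hy, norm_nonneg N, norm_nonneg G,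
      mul_le_mul_of_nonneg_left h1 (by positivity : (0:ℝ) ≤ 2 * s)]
  · -- large N : quantitative positivity of A
    push_neg at hcase
    have h14 : 1 / 4 < s * A := by nlinarith [hN1, hcase]
    have hN2 : ‖N‖ ≤ 2 * (s * A) := by nlinarith [hN1, h14]
    calc ‖N‖ * y ≤ 2 * (s * A) * y := mul_le_mul_of_nonneg_right hN2 hy.le
      _ = 2 * s * (y * A) := by ring
      _ ≤ 2 * s * ‖G‖ := by
          apply mul_le_mul_of_nonneg_left hGnorm (by positivity)
end

section
/- If μ is a probability measure on ℝ and there exists z₀ in the upper half-plane with Im(F_μ(z₀)) = Im(z₀), then μ is a Dirac measure (a point mass at some real number). -/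
open MeasureTheory Filter Topology

theorem stmt2 (μ : Measure ℝ) [IsProbabilityMeasure μ]
    (h : ∃ z₀ : ℂ, 0 < z₀.im ∧ (Frec μ z₀).im = z₀.im) :
    ∃ a : ℝ, μ = Measure.dirac a := by
  obtain ⟨z, hy, hF⟩ := h
  set f : ℝ → ℂ := fun t => (z - (t : ℂ))⁻¹ with hf_def
  have him : ∀ t : ℝ, (z - (t : ℂ)).im = z.im := by
    intro t; simp [Complex.sub_im]
  have hne : ∀ t : ℝ, z - (t : ℂ) ≠ 0 := by
    intro t h0
    have := him t
    rw [h0] at this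
    simp at this
    linarith
  have hcont : Continuous f := Continuous.inv₀ (by continuity) hne
  -- bound on f
  have habs : ∀ t : ℝ, z.im ≤ ‖z - (t : ℂ)‖ := by
    intro t
    calc z.im = |(z - (t : ℂ)).im| := by rw [him t, abs_of_pos hy]
      _ ≤ ‖z - (t : ℂ)‖ := Complex.abs_im_le_norm _
  have hbound : ∀ t : ℝ, ‖f t‖ ≤ z.im⁻¹ := by
    intro t
    rw [hf_def]
    simp only [norm_inv]
    exact inv_anti₀ hy (habs t)
  have hf_int : Integrable f μ :=
    ⟨hcont.aestronglyMeasurable, HasFiniteIntegral.of_bounded (Filter.Eventually.of_forall hbound)⟩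
  -- normSq bound
  have hnormSq_pos : ∀ t : ℝ, 0 < Complex.normSq (z - (t : ℂ)) := by
    intro t; exact Complex.normSq_pos.mpr (hne t)
  have hS_cont : Continuous fun t : ℝ => (Complex.normSq (z - (t : ℂ)))⁻¹ := by
    apply Continuous.inv₀
    · exact Complex.continuous_normSq.comp (by continuity)
    · intro t; exact (hnormSq_pos t).ne'
  have hS_bound : ∀ t : ℝ, ‖(Complex.normSq (z - (t : ℂ)))⁻¹‖ ≤ (z.im ^ 2)⁻¹ := by
    intro t
    rw [Real.norm_eq_abs, abs_of_pos (inv_pos.mpr (hnormSq_pos t))]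
    apply inv_anti₀ (by positivity)
    rw [← Complex.sq_norm]
    exact pow_le_pow_left₀ hy.le (habs t) 2
  have hS_int : Integrable (fun t : ℝ => (Complex.normSq (z - (t : ℂ)))⁻¹) μ :=
    ⟨hS_cont.aestronglyMeasurable,
      HasFiniteIntegral.of_bounded (Filter.Eventually.of_forall hS_bound)⟩
  set G : ℂ := cauchyG μ z with hG_def
  have hGint : G = ∫ t, f t ∂μ := rfl
  -- G ≠ 0
  have hG_ne : G ≠ 0 := by
    intro h0
    rw [Frec, ← hG_def, h0] at hF
    simp at hF
    linarith
  have hnormSqG_pos : 0 < Complex.normSq G := Complex.normSq_pos.mpr hG_ne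
  -- imaginary part of G
  have hGim : G.im = -z.im * ∫ t, (Complex.normSq (z - (t : ℂ)))⁻¹ ∂μ := by
    rw [hGint]
    have h1 : (∫ t, f t ∂μ).im = ∫ t, (f t).im ∂μ := by
      have := integral_im hf_int
      simpa using this.symm
    rw [h1]
    have h2 : ∀ t : ℝ, (f t).im = -z.im * (Complex.normSq (z - (t : ℂ)))⁻¹ := by
      intro t
      rw [hf_def]
      simp only [Complex.inv_im, him t]
      ring
    simp_rw [h2]
    rw [integral_const_mul]
  set S : ℝ := ∫ t, (Complex.normSq (z - (t : ℂ)))⁻¹ ∂μ with hS_def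
  -- the equality case gives S = normSq G
  have hSeq : S = Complex.normSq G := by
    have h1 : (G⁻¹).im = z.im := hF
    rw [Complex.inv_im, hGim] at h1
    rw [div_eq_iff hnormSqG_pos.ne'] at h1
    have h2 : z.im * S = z.im * Complex.normSq G := by linarith
    exact mul_left_cancel₀ hy.ne' h2
  -- expand ∫ normSq (f t - G)
  have hmul_int : Integrable (fun t => (f t * (starRingEnd ℂ) G).re) μ :=
    (hf_int.mul_const _).re
  have hmul : ∫ t, (f t * (starRingEnd ℂ) G).re ∂μ = Complex.normSq G := by
    have h1 : ∫ t, f t * (starRingEnd ℂ) G ∂μ = G * (starRingEnd ℂ) G :=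
      by rw [integral_mul_const, ← hGint]
    have h2 := integral_re (hf_int.mul_const ((starRingEnd ℂ) G))
    have h2' : ∫ t, (f t * (starRingEnd ℂ) G).re ∂μ = (∫ t, f t * (starRingEnd ℂ) G ∂μ).re := by
      simpa using h2
    rw [h2', h1, Complex.mul_conj]
    simp
  have hexp : ∀ t : ℝ, Complex.normSq (f t - G)
      = (Complex.normSq (z - (t : ℂ)))⁻¹ + Complex.normSq G
        - 2 * (f t * (starRingEnd ℂ) G).re := by
    intro t
    rw [Complex.normSq_sub]
    have hns : Complex.normSq (f t) = (Complex.normSq (z - (t : ℂ)))⁻¹ := by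
      rw [hf_def]; simp [Complex.normSq_inv]
    rw [hns]
  have hsum_int : Integrable
      (fun t : ℝ => (Complex.normSq (z - (t : ℂ)))⁻¹ + Complex.normSq G) μ := by
    exact hS_int.add (integrable_const _)
  have h2int : Integrable (fun t => 2 * (f t * (starRingEnd ℂ) G).re) μ := by
    exact hmul_int.const_mul 2
  have hvar_int : Integrable (fun t => Complex.normSq (f t - G)) μ := by
    have heq : (fun t => Complex.normSq (f t - G))
        = fun t : ℝ => (Complex.normSq (z - (t : ℂ)))⁻¹ + Complex.normSq G
          - 2 * (f t * (starRingEnd ℂ) G).re := funext hexp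
    rw [heq]
    exact hsum_int.sub h2int
  have hvar : ∫ t, Complex.normSq (f t - G) ∂μ = 0 := by
    simp_rw [hexp]
    rw [integral_sub hsum_int h2int, integral_add hS_int (integrable_const _),
      integral_const_mul, hmul, integral_const]
    simp only [probReal_univ, one_smul]
    rw [← hS_def, hSeq]
    ring
  -- conclude f t = G a.e.
  have hae : ∀ᵐ t ∂μ, Complex.normSq (f t - G) = 0 := by
    have := (integral_eq_zero_iff_of_nonneg (fun t => Complex.normSq_nonneg _) hvar_int).mp hvar
    filter_upwards [this] with t ht
    exact ht
  set a : ℝ := (z - G⁻¹).re with ha_def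
  have hae2 : ∀ᵐ t ∂μ, t = a := by
    filter_upwards [hae] with t ht
    have hfG : f t = G := sub_eq_zero.mp (Complex.normSq_eq_zero.mp ht)
    have hzt : z - (t : ℂ) = G⁻¹ := by
      rw [hf_def] at hfG
      simp only at hfG
      rw [← hfG, inv_inv]
    have : (t : ℂ) = z - G⁻¹ := by
      rw [← hzt]; ring
    calc t = ((t : ℂ)).re := by simp
      _ = (z - G⁻¹).re := by rw [this]
  -- conclude μ = dirac a
  refine ⟨a, ?_⟩
  have hcompl : μ {t : ℝ | t ≠ a} = 0 := hae2
  ext s hs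
  rw [Measure.dirac_apply' _ hs]
  by_cases hmem : a ∈ s
  · rw [Set.indicator_of_mem hmem]
    have h1 : μ sᶜ = 0 := by
      apply measure_mono_null _ hcompl
      intro t ht hta
      exact ht (by rw [hta]; exact hmem)
    have := measure_compl hs.compl (measure_ne_top μ _)
    rw [compl_compl] at this
    rw [this, h1, measure_univ]
    simp
  · rw [Set.indicator_of_notMem hmem]
    apply measure_mono_null _ hcompl
    intro t ht
    exact fun h => hmem (h ▸ ht)
end

section
/- Let φ(z) = α + ∫ (1+tz)/(z-t) dν(t) where ν is a finite positive measure with ν([a,b]) > 0 for some reals a ≤ b, and α ∈ ℝ. Then for every z = x + iy with y > 0, -Im(φ(z)) ≥ y · ν([a,b]) / max(|z - a|², |z - b|²). -/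
open MeasureTheory Filter Topology

theorem stmt4 (ν : Measure ℝ) [IsFiniteMeasure ν] (α a b : ℝ) (hab : a ≤ b)
    (hν : 0 < (ν (Set.Icc a b)).toReal) (φ : ℂ → ℂ)
    (hφ : ∀ z : ℂ, 0 < z.im → φ z = α + ∫ t, (1 + (t : ℂ) * z) / (z - (t : ℂ)) ∂ν) :
    ∀ z : ℂ, 0 < z.im →
      z.im * (ν (Set.Icc a b)).toReal /
          max (‖z - (a : ℂ)‖ ^ 2) (‖z - (b : ℂ)‖ ^ 2)
        ≤ -(φ z).im := by
  intro z hz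
  have hz0 : ∀ t : ℝ, z - (t : ℂ) ≠ 0 := by
    intro t h
    have : (z - (t : ℂ)).im = 0 := by rw [h]; simp
    simp [Complex.sub_im] at this
    linarith
  -- integrability of inverse
  have hcont : Continuous fun t : ℝ => (z - (t : ℂ))⁻¹ :=
    (continuous_const.sub Complex.continuous_ofReal).inv₀ hz0
  have hinv : Integrable (fun t : ℝ => (z - (t : ℂ))⁻¹) ν := by
    refine Integrable.mono' (integrable_const (z.im)⁻¹) hcont.aestronglyMeasurable ?_
    filter_upwards with t
    have h1 : z.im ≤ ‖z - (t : ℂ)‖ := by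
      have := Complex.abs_im_le_norm (z - (t : ℂ))
      simp [Complex.sub_im] at this
      linarith [abs_nonneg z.im, le_abs_self z.im, this]
    rw [norm_inv]
    simpa using inv_anti₀ hz h1
  have hfeq : (fun t : ℝ => (1 + (t : ℂ) * z) / (z - (t : ℂ)))
      = fun t : ℝ => -z + (1 + z ^ 2) * (z - (t : ℂ))⁻¹ := by
    funext t
    field_simp [hz0 t]
    ring
  have hfint : Integrable (fun t : ℝ => (1 + (t : ℂ) * z) / (z - (t : ℂ))) ν := by
    rw [hfeq]
    exact (integrable_const (-z)).add (hinv.const_mul _)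
  have himval : ∀ t : ℝ, ((1 + (t : ℂ) * z) / (z - (t : ℂ))).im
      = -(z.im * (1 + t ^ 2) / Complex.normSq (z - (t : ℂ))) := by
    intro t
    have hN : Complex.normSq (z - (t : ℂ)) ≠ 0 := (Complex.normSq_pos.2 (hz0 t)).ne'
    rw [Complex.div_im]
    simp [Complex.sub_re, Complex.sub_im, Complex.add_re, Complex.add_im,
      Complex.mul_re, Complex.mul_im]
    field_simp
    ring
  have hphi : -(φ z).im = ∫ t, z.im * (1 + t ^ 2) / Complex.normSq (z - (t : ℂ)) ∂ν := by
    rw [hφ z hz]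
    have hI := integral_im (𝕜 := ℂ) hfint
    simp only [RCLike.im_to_complex] at hI
    rw [Complex.add_im, Complex.ofReal_im, ← hI, zero_add, ← integral_neg]
    congr 1
    funext t
    rw [himval t]; ring
  set g : ℝ → ℝ := fun t => z.im * (1 + t ^ 2) / Complex.normSq (z - (t : ℂ)) with hg
  have hgint : Integrable g ν := by
    have := (hfint.im).neg
    refine this.congr ?_
    filter_upwards with t
    simp only [Pi.neg_apply, RCLike.im_to_complex, hg]
    rw [himval t]; ring
  have hgnn : ∀ t : ℝ, 0 ≤ g t := by
    intro t
    have hN : 0 < Complex.normSq (z - (t : ℂ)) := Complex.normSq_pos.2 (hz0 t)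
    positivity
  set M : ℝ := max (‖z - (a : ℂ)‖ ^ 2) (‖z - (b : ℂ)‖ ^ 2) with hM
  have hMpos : 0 < M := by
    have : 0 < ‖z - (a : ℂ)‖ ^ 2 := by
      have := norm_pos_iff.mpr (hz0 a)
      positivity
    exact lt_max_of_lt_left this
  -- pointwise bound on Icc
  have hle : ∀ t ∈ Set.Icc a b, z.im / M ≤ g t := by
    intro t ht
    obtain ⟨ht1, ht2⟩ := ht
    have hN : 0 < Complex.normSq (z - (t : ℂ)) := Complex.normSq_pos.2 (hz0 t)
    have hNM : Complex.normSq (z - (t : ℂ)) ≤ M := by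
      have e : ∀ s : ℝ, Complex.normSq (z - (s : ℂ)) = (z.re - s) ^ 2 + z.im ^ 2 := by
        intro s
        rw [Complex.normSq_apply]
        simp [Complex.sub_re, Complex.sub_im]
        ring
      have e2 : ∀ s : ℝ, ‖z - (s : ℂ)‖ ^ 2 = (z.re - s) ^ 2 + z.im ^ 2 := by
        intro s; rw [Complex.sq_norm]; exact e s
      rw [e t, hM, e2 a, e2 b]
      rcases le_total t z.re with h | h
      · refine le_max_of_le_left ?_
        nlinarith
      · refine le_max_of_le_right ?_
        nlinarith
    have h1 : z.im / M ≤ z.im / Complex.normSq (z - (t : ℂ)) :=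
      div_le_div_of_nonneg_left (le_of_lt hz) hN hNM
    refine h1.trans ?_
    rw [hg]
    have : z.im * 1 / Complex.normSq (z - (t : ℂ)) ≤
        z.im * (1 + t ^ 2) / Complex.normSq (z - (t : ℂ)) := by
      gcongr
      nlinarith
    simpa using this
  have step1 : ∫ t in Set.Icc a b, g t ∂ν ≤ ∫ t, g t ∂ν := by
    apply setIntegral_le_integral hgint
    filter_upwards with t using hgnn t
  have step2 : (z.im / M) * (ν (Set.Icc a b)).toReal ≤ ∫ t in Set.Icc a b, g t ∂ν := by
    have := setIntegral_mono_on (integrableOn_const (measure_lt_top _ _).ne enorm_ne_top)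
      (hgint.integrableOn) measurableSet_Icc hle
    calc (z.im / M) * (ν (Set.Icc a b)).toReal
        = ∫ _ in Set.Icc a b, z.im / M ∂ν := by
          rw [setIntegral_const, smul_eq_mul, measureReal_def]; ring
      _ ≤ _ := this
  rw [hphi]
  calc z.im * (ν (Set.Icc a b)).toReal / M = (z.im / M) * (ν (Set.Icc a b)).toReal := by ring
    _ ≤ ∫ t in Set.Icc a b, g t ∂ν := step2
    _ ≤ ∫ t, g t ∂ν := step1
end

section
/- Let μ have mean 0 and variance σ². Then F_μ⁻¹ is defined on ℂ⁺_{2σ} = {z : Im z > 2σ}, maps into ℂ⁺_σ, and the Voiculescu transform φ_μ(z) = F_μ⁻¹(z) − z satisfies |φ_μ(z)| ≤ 2σ²/Im(z) for all z with Im z > 2σ. -/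
open MeasureTheory Filter Topology

namespace StmtAux
open Metric Set


noncomputable def gg (w : ℂ) (t : ℝ) : ℝ := (Complex.normSq (w - (t:ℂ)))⁻¹

variable {μ : Measure ℝ} [IsProbabilityMeasure μ] {w : ℂ} {t : ℝ}

lemma im_wsub (w : ℂ) (t : ℝ) : (w - (t:ℂ)).im = w.im := by
  simp [Complex.sub_im, Complex.ofReal_im]

lemma wsub_ne (hw : 0 < w.im) (t : ℝ) : w - (t:ℂ) ≠ 0 := by
  intro h
  have := im_wsub w t
  rw [h] at this
  simp at this
  exact absurd this.symm (ne_of_gt hw)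

lemma normSq_wsub (w : ℂ) (t : ℝ) :
    Complex.normSq (w - (t:ℂ)) = (w.re - t)^2 + w.im^2 := by
  rw [Complex.normSq_apply]
  simp [Complex.sub_re, Complex.sub_im, Complex.ofReal_re, Complex.ofReal_im]
  ring

lemma normSq_wsub_pos (hw : 0 < w.im) (t : ℝ) : 0 < Complex.normSq (w - (t:ℂ)) := by
  rw [normSq_wsub]; positivity

lemma gg_pos (hw : 0 < w.im) (t : ℝ) : 0 < gg w t := by
  unfold gg; exact inv_pos.mpr (normSq_wsub_pos hw t)

lemma gg_le (hw : 0 < w.im) (t : ℝ) : gg w t ≤ (w.im^2)⁻¹ := by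
  unfold gg
  apply inv_anti₀ (by positivity)
  rw [normSq_wsub]; nlinarith [sq_nonneg (w.re - t)]

lemma Y2gg_le (hw : 0 < w.im) (t : ℝ) : (w.re - t)^2 * gg w t ≤ 1 := by
  have h1 := normSq_wsub_pos hw t
  have h2 : (w.re - t)^2 ≤ Complex.normSq (w - (t:ℂ)) := by
    rw [normSq_wsub]; nlinarith
  unfold gg
  calc (w.re - t)^2 * (Complex.normSq (w - (t:ℂ)))⁻¹
      ≤ Complex.normSq (w - (t:ℂ)) * (Complex.normSq (w - (t:ℂ)))⁻¹ := by
        apply mul_le_mul_of_nonneg_right h2 (by positivity)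
  _ = 1 := mul_inv_cancel₀ (ne_of_gt h1)

lemma Ygg_le (hw : 0 < w.im) (t : ℝ) : |(w.re - t) * gg w t| ≤ (w.im)⁻¹ := by
  have h1 := normSq_wsub_pos hw t
  have hg := gg_pos hw t
  rw [abs_mul, abs_of_pos hg]
  rw [show |w.re - t| * gg w t = |w.re - t| / Complex.normSq (w - (t:ℂ)) from rfl]
  rw [div_le_iff₀ h1, normSq_wsub, inv_mul_eq_div, le_div_iff₀ hw]
  nlinarith [sq_nonneg (|w.re - t| * w.im - 1), sq_abs (w.re - t), abs_nonneg (w.re - t)]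
  
lemma normSq_X (hw : 0 < w.im) (t : ℝ) : Complex.normSq ((w - (t:ℂ))⁻¹) = gg w t := by
  rw [Complex.normSq_inv]; rfl

lemma norm_X_sq (hw : 0 < w.im) (t : ℝ) : ‖(w - (t:ℂ))⁻¹‖^2 = gg w t := by
  rw [Complex.sq_norm, normSq_X hw]

lemma norm_X_le (hw : 0 < w.im) (t : ℝ) : ‖(w - (t:ℂ))⁻¹‖ ≤ (w.im)⁻¹ := by
  rw [norm_inv]
  apply inv_anti₀ hw
  calc w.im = |(w - (t:ℂ)).im| := by rw [im_wsub]; exact (abs_of_pos hw).symm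
  _ ≤ ‖w - (t:ℂ)‖ := Complex.abs_im_le_norm _
  _ = ‖w - (t:ℂ)‖ := rfl

lemma X_re (hw : 0 < w.im) (t : ℝ) : ((w - (t:ℂ))⁻¹).re = (w.re - t) * gg w t := by
  rw [Complex.inv_re]
  simp [Complex.sub_re, Complex.ofReal_re, gg, div_eq_mul_inv]

lemma X_im (hw : 0 < w.im) (t : ℝ) : ((w - (t:ℂ))⁻¹).im = -(w.im * gg w t) := by
  rw [Complex.inv_im, im_wsub]
  simp [gg, div_eq_mul_inv]

lemma cont_X (hw : 0 < w.im) : Continuous (fun t : ℝ => (w - (t:ℂ))⁻¹) := by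
  apply Continuous.inv₀
  · exact continuous_const.sub Complex.continuous_ofReal
  · exact fun t => wsub_ne hw t

lemma cont_gg (hw : 0 < w.im) : Continuous (gg w) := by
  apply Continuous.inv₀
  · exact Complex.continuous_normSq.comp (continuous_const.sub Complex.continuous_ofReal)
  · exact fun t => ne_of_gt (normSq_wsub_pos hw t)

lemma normsq_norm (z : ℂ) : ‖z‖^2 = Complex.normSq z := by
  rw [Complex.sq_norm]

lemma integrable_dom {E : Type*} [NormedAddCommGroup E]
    (h2 : Integrable (fun t : ℝ => t^2) μ) {f : ℝ → E}
    (hm : AEStronglyMeasurable f μ) {c : ℝ} (hb : ∀ t, ‖f t‖ ≤ c * (1 + t^2)) :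
    Integrable f μ := by
  have hi : Integrable (fun t : ℝ => c * (1 + t^2)) μ :=
    (((integrable_const (1:ℝ)).add h2)).const_mul c
  exact Integrable.mono' hi hm (ae_of_all _ hb)



section
variable {μ : Measure ℝ} [IsProbabilityMeasure μ] {w : ℂ} {σ : ℝ}

lemma int_X (h2 : Integrable (fun t : ℝ => t^2) μ) (hw : 0 < w.im) :
    Integrable (fun t : ℝ => (w - (t:ℂ))⁻¹) μ := by
  apply integrable_dom h2 (cont_X hw).aestronglyMeasurable (c := (w.im)⁻¹)
  intro t
  have h1 := norm_X_le hw t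
  nlinarith [sq_nonneg t, inv_pos.mpr hw]

lemma int_gg (h2 : Integrable (fun t : ℝ => t^2) μ) (hw : 0 < w.im) :
    Integrable (gg w) μ := by
  apply integrable_dom h2 (cont_gg hw).aestronglyMeasurable (c := (w.im^2)⁻¹)
  intro t
  have h1 := gg_le hw t
  have h2' := gg_pos hw t
  have : (0:ℝ) < (w.im^2)⁻¹ := by positivity
  rw [Real.norm_eq_abs, abs_of_pos h2']
  nlinarith [sq_nonneg t]

lemma int_tgg (h2 : Integrable (fun t : ℝ => t^2) μ) (hw : 0 < w.im) :
    Integrable (fun t => t * gg w t) μ := by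
  have hc : Continuous fun t : ℝ => t * gg w t := Continuous.mul continuous_id (cont_gg hw)
  apply integrable_dom h2 hc.aestronglyMeasurable (c := (w.im^2)⁻¹)
  intro t
  have h1 := gg_le hw t
  have h2' := gg_pos hw t
  have h3 : (0:ℝ) < (w.im^2)⁻¹ := by positivity
  rw [Real.norm_eq_abs, abs_mul, abs_of_pos h2']
  nlinarith [abs_nonneg t, sq_abs t, sq_nonneg (|t| - 1), mul_le_mul_of_nonneg_left h1 (abs_nonneg t)]

lemma int_t2gg (h2 : Integrable (fun t : ℝ => t^2) μ) (hw : 0 < w.im) :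
    Integrable (fun t => t^2 * gg w t) μ := by
  have hc : Continuous fun t : ℝ => t^2 * gg w t := Continuous.mul (continuous_pow 2) (cont_gg hw)
  apply integrable_dom h2 hc.aestronglyMeasurable (c := (w.im^2)⁻¹)
  intro t
  have h1 := gg_le hw t
  have h2' := gg_pos hw t
  have h3 : (0:ℝ) < (w.im^2)⁻¹ := by positivity
  rw [Real.norm_eq_abs]
  rw [abs_of_nonneg (by positivity)]
  nlinarith [mul_le_mul_of_nonneg_left h1 (sq_nonneg t)]

lemma int_poly (h2 : Integrable (fun t : ℝ => t^2) μ) (hw : 0 < w.im) (c2 c1 c0 : ℝ) :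
    Integrable (fun t => (c2*t^2 + c1*t + c0) * gg w t) μ := by
  have e : (fun t => (c2*t^2 + c1*t + c0) * gg w t)
      = fun t => c2*(t^2 * gg w t) + c1*(t * gg w t) + c0*(gg w t) := by
    funext t; ring
  rw [e]
  exact (((int_t2gg h2 hw).const_mul c2).add ((int_tgg h2 hw).const_mul c1)).add
    ((int_gg h2 hw).const_mul c0)

lemma integral_poly_gg (h2 : Integrable (fun t : ℝ => t^2) μ) (hw : 0 < w.im) (c2 c1 c0 : ℝ) :
    ∫ t, (c2*t^2 + c1*t + c0) * gg w t ∂μ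
      = c2*(∫ t, t^2 * gg w t ∂μ) + c1*(∫ t, t * gg w t ∂μ) + c0*(∫ t, gg w t ∂μ) := by
  have e : (fun t => (c2*t^2 + c1*t + c0) * gg w t)
      = fun t => c2*(t^2 * gg w t) + c1*(t * gg w t) + c0*(gg w t) := by
    funext t; ring
  rw [e]
  have i1 : Integrable (fun t => c2*(t^2 * gg w t) + c1*(t * gg w t)) μ :=
    ((int_t2gg h2 hw).const_mul c2).add ((int_tgg h2 hw).const_mul c1)
  rw [integral_add i1 ((int_gg h2 hw).const_mul c0),
    integral_add ((int_t2gg h2 hw).const_mul c2) ((int_tgg h2 hw).const_mul c1),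
    integral_const_mul, integral_const_mul, integral_const_mul]

lemma P_pos (h2 : Integrable (fun t : ℝ => t^2) μ) (hw : 0 < w.im) :
    0 < ∫ t, gg w t ∂μ := by
  rw [integral_pos_iff_support_of_nonneg (fun t => (gg_pos hw t).le) (int_gg h2 hw)]
  have : Function.support (fun t => gg w t) = Set.univ :=
    Set.eq_univ_of_forall (fun t => ne_of_gt (gg_pos hw t))
  rw [this, measure_univ]
  simp

end

section

variable {μ : Measure ℝ} [IsProbabilityMeasure μ] {w : ℂ} {σ : ℝ}

lemma alg_main (u v σ P τ T0 T2 : ℝ) (hv : 0 < v) (hP : 0 < P)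
    (hIA : u^2*P - 2*u*τ + T0 + v^2*P = 1)
    (hIB : T2 + v^2*T0 = σ^2)
    (hCS : (u*τ - T0)^2 ≤ T2*P) :
    v^2*P ≤ (v^2 + σ^2) * ((u*P - τ)^2 + v^2*P^2) := by
  have hT0 : T0 = 1 - v^2*P - u^2*P + 2*u*τ := by linarith
  subst hT0
  have hT2 : T2 = σ^2 - v^2*(1 - v^2*P - u^2*P + 2*u*τ) := by linarith
  subst hT2
  set E : ℝ := 1 - v^2*P - u^2*P + 2*u*τ with hE
  set Q : ℝ := (u*P - τ)^2 + v^2*P^2 with hQdef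
  set D : ℝ := E*P - τ^2 with hDdef
  have hQpos : 0 < Q := by positivity
  have hDQ : D + Q = P := by rw [hDdef, hQdef, hE]; ring
  have h2 : (u*τ - E)^2 + v^2*τ^2 + v^2*D ≤ σ^2*P := by
    rw [hDdef]; nlinarith [hCS]
  have hJ : ((u*τ - E)^2 + v^2*τ^2) * Q = v^2*D^2 + (u*Q - (u*P - τ))^2 := by
    rw [hDdef, hQdef, hE]; ring
  have hDP : v^2*D*P = v^2*D^2 + v^2*D*Q := by rw [← hDQ]; ring
  have h3 : v^2*D*P ≤ σ^2*P*Q := by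
    nlinarith [mul_le_mul_of_nonneg_right h2 hQpos.le, hJ, sq_nonneg (u*Q - (u*P - τ)), hDP]
  have h4 : v^2*D ≤ σ^2*Q := by
    have h5 : (v^2*D)*P ≤ (σ^2*Q)*P := by nlinarith [h3]
    exact (mul_le_mul_iff_of_pos_right hP).mp h5
  nlinarith [h4, hDQ]

lemma my_cs {μ : Measure ℝ} (f h : ℝ → ℝ)
    (hf : Integrable (fun t => f t ^ 2) μ) (hh : Integrable (fun t => h t ^ 2) μ)
    (hfh : Integrable (fun t => f t * h t) μ) :
    (∫ t, f t * h t ∂μ) ^ 2 ≤ (∫ t, f t ^ 2 ∂μ) * (∫ t, h t ^ 2 ∂μ) := by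
  set A := ∫ t, f t ^ 2 ∂μ with hA
  set B := ∫ t, f t * h t ∂μ with hB
  set C := ∫ t, h t ^ 2 ∂μ with hC
  have hA0 : 0 ≤ A := integral_nonneg fun t => sq_nonneg _
  have hC0 : 0 ≤ C := integral_nonneg fun t => sq_nonneg _
  have expand : ∀ (c b : ℝ), ∫ t, (c * f t - b * h t)^2 ∂μ
      = c^2*A - 2*(c*b)*B + b^2*C := by
    intro c b
    have e : (fun t => (c * f t - b * h t)^2)
        = fun t => c^2*(f t^2) - 2*(c*b)*(f t * h t) + b^2*(h t^2) := by
      funext t; ring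
    rw [e]
    have i1 : Integrable (fun t => c^2*(f t^2) - 2*(c*b)*(f t * h t)) μ :=
      (hf.const_mul _).sub (hfh.const_mul _)
    have i2 : Integrable (fun t => b^2*(h t^2)) μ := hh.const_mul _
    rw [integral_add i1 i2, integral_sub (hf.const_mul _) (hfh.const_mul _),
        integral_const_mul, integral_const_mul, integral_const_mul]
  have h1 : 0 ≤ C^2*A - 2*(C*B)*B + B^2*C := by
    rw [← expand C B]; exact integral_nonneg fun t => sq_nonneg _
  have h2 : 0 ≤ A^2*C - 2*(A*B)*B + B^2*A := by
    have := expand B A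
    have h2' : 0 ≤ ∫ t, (B * f t - A * h t)^2 ∂μ := integral_nonneg fun t => sq_nonneg _
    nlinarith [this, h2']
  rcases hC0.lt_or_eq with hCpos | hCzero
  · nlinarith [h1]
  · rcases hA0.lt_or_eq with hApos | hAzero
    · nlinarith [h2]
    · have h3 : 0 ≤ A + 2*B + C := by
        have := expand 1 (-1)
        have h3' : 0 ≤ ∫ t, (1 * f t - (-1) * h t)^2 ∂μ := integral_nonneg fun t => sq_nonneg _
        nlinarith [this, h3']
      have h4 : 0 ≤ A - 2*B + C := by
        have := expand 1 1
        have h4' : 0 ≤ ∫ t, (1 * f t - 1 * h t)^2 ∂μ := integral_nonneg fun t => sq_nonneg _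
        nlinarith [this, h4']
      nlinarith [h3, h4]

/-- The key variance inequality. -/
lemma key (hσ : 0 < σ) (h2 : Integrable (fun t : ℝ => t^2) μ)
    (hmean : ∫ t, t ∂μ = 0) (hvar : ∫ t, t^2 ∂μ = σ^2) (hw : 0 < w.im) :
    ∫ t, ‖(w - (t:ℂ))⁻¹ - cauchyG μ w‖^2 ∂μ
      ≤ σ^2/w.im^2 * Complex.normSq (cauchyG μ w) := by
  set u := w.re with hu
  set v := w.im with hv'
  set P := ∫ t, gg w t ∂μ with hP'
  set τ := ∫ t, t * gg w t ∂μ with hτ'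
  set T0 := ∫ t, t^2 * gg w t ∂μ with hT0'
  set G := cauchyG μ w with hG'
  have hv : 0 < v := hw
  have hP : 0 < P := P_pos h2 hw
  have e0 : ∀ t : ℝ, ((u - t)^2 + v^2) * gg w t = 1 := by
    intro t
    rw [← normSq_wsub]
    exact mul_inv_cancel₀ (ne_of_gt (normSq_wsub_pos hw t))
  -- identity A
  have hIA : u^2*P - 2*u*τ + T0 + v^2*P = 1 := by
    have e1 : (fun t : ℝ => ((1:ℝ)*t^2 + (-2*u)*t + (u^2 + v^2)) * gg w t)
        = fun t : ℝ => (1:ℝ) := by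
      funext t; linear_combination e0 t
    have e2 := integral_poly_gg h2 hw 1 (-2*u) (u^2+v^2)
    rw [e1] at e2
    simp only [integral_const, probReal_univ, smul_eq_mul, one_mul] at e2
    rw [← hT0', ← hτ', ← hP'] at e2
    linarith [e2]
  -- identity B
  have hIB : (∫ t, t^2*(u - t)^2 * gg w t ∂μ) + v^2*T0 = σ^2 := by
    have e1 : (fun t : ℝ => t^2*(u-t)^2 * gg w t + v^2*(t^2 * gg w t))
        = fun t : ℝ => t^2 := by
      funext t
      linear_combination (t^2) * e0 t
    have i1 : Integrable (fun t : ℝ => t^2*(u-t)^2 * gg w t) μ := by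
      apply integrable_dom h2 ?_ (c := 1)
      · intro t
        have hgnn := (gg_pos hw t).le
        rw [Real.norm_eq_abs, abs_of_nonneg
          (mul_nonneg (mul_nonneg (sq_nonneg _) (sq_nonneg _)) hgnn)]
        nlinarith [mul_le_mul_of_nonneg_left (Y2gg_le hw t) (sq_nonneg t), sq_nonneg t]
      · exact (Continuous.mul (Continuous.mul (continuous_pow 2)
          ((continuous_const.sub continuous_id).pow 2)) (cont_gg hw)).aestronglyMeasurable
    have e2 : ∫ t, (t^2*(u-t)^2 * gg w t + v^2*(t^2 * gg w t)) ∂μ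
        = (∫ t, t^2*(u-t)^2 * gg w t ∂μ) + v^2*T0 := by
      rw [integral_add i1 ((int_t2gg h2 hw).const_mul _), integral_const_mul, hT0']
    rw [← e2, e1, hvar]
  -- integrability of t²(u-t)²g (again, for CS)
  have iT2 : Integrable (fun t : ℝ => t^2*(u-t)^2 * gg w t) μ := by
    apply integrable_dom h2 ?_ (c := 1)
    · intro t
      have hgnn := (gg_pos hw t).le
      rw [Real.norm_eq_abs, abs_of_nonneg
        (mul_nonneg (mul_nonneg (sq_nonneg _) (sq_nonneg _)) hgnn)]
      nlinarith [mul_le_mul_of_nonneg_left (Y2gg_le hw t) (sq_nonneg t), sq_nonneg t]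
    · exact (Continuous.mul (Continuous.mul (continuous_pow 2)
        ((continuous_const.sub continuous_id).pow 2)) (cont_gg hw)).aestronglyMeasurable
  have iTY : Integrable (fun t : ℝ => t*(u-t) * gg w t) μ := by
    have e : (fun t : ℝ => t*(u-t) * gg w t) = fun t => ((-1)*t^2 + u*t + 0) * gg w t := by
      funext t; ring
    rw [e]; exact int_poly h2 hw _ _ _
  -- Cauchy-Schwarz step
  have hCS : (u*τ - T0)^2 ≤ (∫ t, t^2*(u-t)^2 * gg w t ∂μ) * P := by
    have e_fh : (fun t : ℝ => (t*(u - t) * ‖(w - (t:ℂ))⁻¹‖) * ‖(w - (t:ℂ))⁻¹‖)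
        = fun t => t*(u-t) * gg w t := by
      funext t
      rw [mul_assoc, ← sq, norm_X_sq hw]
    have e_f2 : (fun t : ℝ => (t*(u - t) * ‖(w - (t:ℂ))⁻¹‖)^2)
        = fun t => t^2*(u-t)^2 * gg w t := by
      funext t
      rw [mul_pow, mul_pow, norm_X_sq hw]
    have e_h2 : (fun t : ℝ => (‖(w - (t:ℂ))⁻¹‖)^2) = fun t => gg w t :=
      funext fun t => norm_X_sq hw t
    have hf2 : Integrable (fun t : ℝ => (t*(u - t) * ‖(w - (t:ℂ))⁻¹‖)^2) μ := by
      rw [e_f2]; exact iT2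
    have hh2 : Integrable (fun t : ℝ => (‖(w - (t:ℂ))⁻¹‖)^2) μ := by
      rw [e_h2]; exact int_gg h2 hw
    have hfh : Integrable (fun t : ℝ => (t*(u - t) * ‖(w - (t:ℂ))⁻¹‖) * ‖(w - (t:ℂ))⁻¹‖) μ := by
      rw [e_fh]; exact iTY
    have cs := my_cs _ _ hf2 hh2 hfh
    rw [e_fh, e_f2, e_h2] at cs
    have eTY : ∫ t, t*(u-t) * gg w t ∂μ = u*τ - T0 := by
      have e : (fun t : ℝ => t*(u-t) * gg w t) = fun t => ((-1)*t^2 + u*t + 0) * gg w t := by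
        funext t; ring
      rw [e, integral_poly_gg h2 hw, ← hT0', ← hτ', ← hP']
      ring
    rw [eTY, ← hP'] at cs
    exact cs
  -- components of G
  have hGre : G.re = u*P - τ := by
    have h1 := integral_re (int_X h2 hw)
    simp only [RCLike.re_to_complex] at h1
    have e : (fun t : ℝ => ((w - (t:ℂ))⁻¹).re) = fun t => ((0:ℝ)*t^2 + (-1)*t + u) * gg w t := by
      funext t; rw [X_re hw]; ring
    rw [hG', cauchyG]
    rw [← h1]
    have : ∫ t, ((w - (t:ℂ))⁻¹).re ∂μ = u*P - τ := by
      rw [e, integral_poly_gg h2 hw, ← hT0', ← hτ', ← hP']; ring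
    simpa using this
  have hGim : G.im = -(v*P) := by
    have h1 := integral_im (int_X h2 hw)
    simp only [RCLike.im_to_complex] at h1
    have e : (fun t : ℝ => ((w - (t:ℂ))⁻¹).im) = fun t => (-v) * gg w t := by
      funext t; rw [X_im hw]; ring
    rw [hG', cauchyG, ← h1]
    have : ∫ t, ((w - (t:ℂ))⁻¹).im ∂μ = -(v*P) := by
      rw [e, integral_const_mul, ← hP']; ring
    simpa using this
  have hnG : Complex.normSq G = (u*P - τ)^2 + v^2*P^2 := by
    rw [Complex.normSq_apply, hGre, hGim]; ring
  have main := alg_main u v σ P τ T0 _ hv hP hIA hIB hCS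
  -- identity for the variance integral
  have e3 : (fun t : ℝ => ‖(w - (t:ℂ))⁻¹ - G‖^2)
      = fun t => ((0:ℝ)*t^2 + (2*G.re)*t + (1 - 2*G.re*u + 2*G.im*v))*gg w t
          + Complex.normSq G := by
    funext t
    rw [normsq_norm, Complex.normSq_apply, Complex.sub_re, Complex.sub_im,
      X_re hw, X_im hw, Complex.normSq_apply]
    linear_combination (gg w t) * e0 t
  have Vid : ∫ t, ‖(w - (t:ℂ))⁻¹ - G‖^2 ∂μ = P - Complex.normSq G := by
    rw [e3, integral_add (int_poly h2 hw _ _ _) (integrable_const _), integral_const,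
      integral_poly_gg h2 hw, ← hT0', ← hτ', ← hP']
    simp only [probReal_univ, smul_eq_mul, one_mul]
    rw [hnG, hGre, hGim]
    ring
  rw [Vid]
  have hv2 : 0 < v^2 := by positivity
  rw [div_mul_eq_mul_div, le_div_iff₀ hv2]
  nlinarith [main, hnG]

end

section

variable {μ : Measure ℝ} [IsProbabilityMeasure μ] {w : ℂ} {σ : ℝ}

lemma G_im (h2 : Integrable (fun t : ℝ => t^2) μ) (hw : 0 < w.im) :
    (cauchyG μ w).im = -(w.im * ∫ t, gg w t ∂μ) := by
  have h1 := integral_im (int_X h2 hw)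
  simp only [RCLike.im_to_complex] at h1
  have e : (fun t : ℝ => ((w - (t:ℂ))⁻¹).im) = fun t => (-w.im) * gg w t := by
    funext t; rw [X_im hw]; ring
  rw [cauchyG, ← h1, e, integral_const_mul]
  ring

lemma G_ne (h2 : Integrable (fun t : ℝ => t^2) μ) (hw : 0 < w.im) :
    cauchyG μ w ≠ 0 := by
  intro h
  have h1 := G_im h2 hw
  rw [h] at h1
  simp only [Complex.zero_im] at h1
  have := P_pos h2 hw
  nlinarith [this, hw]

lemma norm_G_pos (h2 : Integrable (fun t : ℝ => t^2) μ) (hw : 0 < w.im) :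
    0 < ‖cauchyG μ w‖ := norm_pos_iff.mpr (G_ne h2 hw)

lemma int_tc (h2 : Integrable (fun t : ℝ => t^2) μ) :
    Integrable (fun t : ℝ => (t:ℂ)) μ := by
  apply integrable_dom h2 Complex.continuous_ofReal.aestronglyMeasurable (c := 1)
  intro t
  rw [Complex.norm_real, Real.norm_eq_abs]
  nlinarith [sq_nonneg (|t| - 1), sq_abs t, abs_nonneg t]

lemma int_tX (h2 : Integrable (fun t : ℝ => t^2) μ) (hw : 0 < w.im) :
    Integrable (fun t : ℝ => (t:ℂ) * (w - (t:ℂ))⁻¹) μ := by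
  apply integrable_dom h2 (Complex.continuous_ofReal.mul (cont_X hw)).aestronglyMeasurable
    (c := (w.im)⁻¹)
  intro t
  simp only [Pi.mul_apply]
  rw [norm_mul, Complex.norm_real, Real.norm_eq_abs]
  have h1 := norm_X_le hw t
  have h0 : (0:ℝ) < (w.im)⁻¹ := by positivity
  have h3 : |t| * ‖(w - (t:ℂ))⁻¹‖ ≤ |t| * (w.im)⁻¹ :=
    mul_le_mul_of_nonneg_left h1 (abs_nonneg t)
  nlinarith [sq_nonneg (|t| - 1), sq_abs t, abs_nonneg t]

lemma int_normXG2 (h2 : Integrable (fun t : ℝ => t^2) μ) (hw : 0 < w.im) :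
    Integrable (fun t : ℝ => ‖(w - (t:ℂ))⁻¹ - cauchyG μ w‖^2) μ := by
  set b := (w.im)⁻¹ + ‖cauchyG μ w‖ with hb
  have hb0 : 0 ≤ b := by rw [hb]; positivity
  clear_value b
  apply integrable_dom h2 ?_ (c := b^2)
  · intro t
    have h1 : ‖(w - (t:ℂ))⁻¹ - cauchyG μ w‖ ≤ b := by
      calc ‖(w - (t:ℂ))⁻¹ - cauchyG μ w‖
          ≤ ‖(w - (t:ℂ))⁻¹‖ + ‖cauchyG μ w‖ := norm_sub_le _ _
        _ ≤ b := by rw [hb]; linarith [norm_X_le hw t]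
    rw [Real.norm_eq_abs, abs_of_nonneg (sq_nonneg _)]
    nlinarith [sq_nonneg t, norm_nonneg ((w - (t:ℂ))⁻¹ - cauchyG μ w)]
  · exact (((cont_X hw).sub continuous_const).norm.pow 2).aestronglyMeasurable

/-- Bound on the numerator `s = ∫ t/(w-t)`. -/
lemma sbound (hσ : 0 < σ) (h2 : Integrable (fun t : ℝ => t^2) μ)
    (hmean : ∫ t, t ∂μ = 0) (hvar : ∫ t, t^2 ∂μ = σ^2) (hw : 0 < w.im) :
    ‖∫ t, (t:ℂ) * (w - (t:ℂ))⁻¹ ∂μ‖ ≤ σ^2 / w.im * ‖cauchyG μ w‖ := by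
  set G := cauchyG μ w with hG'
  -- rewrite s as ∫ t (X - G)
  have hint2 : Integrable (fun t : ℝ => (t:ℂ) * G) μ := (int_tc h2).mul_const G
  have e1 : ∫ t, (t:ℂ) * ((w - (t:ℂ))⁻¹ - G) ∂μ = ∫ t, (t:ℂ) * (w - (t:ℂ))⁻¹ ∂μ := by
    have e : (fun t : ℝ => (t:ℂ) * ((w - (t:ℂ))⁻¹ - G))
        = fun t : ℝ => (t:ℂ) * (w - (t:ℂ))⁻¹ - (t:ℂ) * G := by
      funext t; ring
    rw [e, integral_sub (int_tX h2 hw) hint2, integral_mul_const,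
      show (∫ a:ℝ, (a:ℂ) ∂μ) = ((∫ a:ℝ, a ∂μ : ℝ) : ℂ) from integral_ofReal, hmean]
    simp
  rw [← e1]
  -- norm into the real integral
  have e2 : ‖∫ t, (t:ℂ) * ((w - (t:ℂ))⁻¹ - G) ∂μ‖
      ≤ ∫ t, |t| * ‖(w - (t:ℂ))⁻¹ - G‖ ∂μ := by
    calc ‖∫ t, (t:ℂ) * ((w - (t:ℂ))⁻¹ - G) ∂μ‖
        ≤ ∫ t, ‖(t:ℂ) * ((w - (t:ℂ))⁻¹ - G)‖ ∂μ := norm_integral_le_integral_norm _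
      _ = ∫ t, |t| * ‖(w - (t:ℂ))⁻¹ - G‖ ∂μ := by
          congr 1; funext t; rw [norm_mul, Complex.norm_real, Real.norm_eq_abs]
  -- Cauchy-Schwarz
  have hf2 : Integrable (fun t : ℝ => (|t|)^2) μ := by
    have e : (fun t : ℝ => (|t|)^2) = fun t : ℝ => t^2 := by funext t; exact sq_abs t
    rw [e]; exact h2
  have hfh : Integrable (fun t : ℝ => |t| * ‖(w - (t:ℂ))⁻¹ - G‖) μ := by
    set b := (w.im)⁻¹ + ‖G‖ with hb
    have hb0 : 0 ≤ b := by rw [hb]; positivity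
    clear_value b
    apply integrable_dom h2 ?_ (c := b)
    · intro t
      have h1 : ‖(w - (t:ℂ))⁻¹ - G‖ ≤ b := by
        calc ‖(w - (t:ℂ))⁻¹ - G‖ ≤ ‖(w - (t:ℂ))⁻¹‖ + ‖G‖ := norm_sub_le _ _
          _ ≤ b := by rw [hb]; linarith [norm_X_le hw t]
      rw [Real.norm_eq_abs, abs_of_nonneg (mul_nonneg (abs_nonneg t) (norm_nonneg _))]
      have h3 : |t| * ‖(w - (t:ℂ))⁻¹ - G‖ ≤ |t| * b := mul_le_mul_of_nonneg_left h1 (abs_nonneg t)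
      have habs : |t| ≤ 1 + t^2 := by nlinarith [sq_nonneg (|t| - 1), sq_abs t, abs_nonneg t]
      nlinarith [mul_le_mul_of_nonneg_right habs hb0]
    · exact (continuous_abs.mul ((cont_X hw).sub continuous_const).norm).aestronglyMeasurable
  have cs := my_cs _ _ hf2 (int_normXG2 h2 hw) hfh
  have hkey := key hσ h2 hmean hvar hw
  rw [← hG'] at hkey
  have hvarabs : ∫ t, (|t|)^2 ∂μ = σ^2 := by
    have e : (fun t : ℝ => (|t|)^2) = fun t : ℝ => t^2 := by funext t; exact sq_abs t
    rw [e]; exact hvar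
  rw [hvarabs] at cs
  -- assemble
  have hnG : Complex.normSq G = ‖G‖^2 := by
    rw [normsq_norm]
  have h4 : (∫ t, |t| * ‖(w - (t:ℂ))⁻¹ - G‖ ∂μ)^2 ≤ (σ^2/w.im * ‖G‖)^2 := by
    calc (∫ t, |t| * ‖(w - (t:ℂ))⁻¹ - G‖ ∂μ)^2
        ≤ σ^2 * ∫ t, ‖(w - (t:ℂ))⁻¹ - G‖^2 ∂μ := cs
      _ ≤ σ^2 * (σ^2/w.im^2 * Complex.normSq G) := by
          apply mul_le_mul_of_nonneg_left hkey (sq_nonneg σ)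
      _ = (σ^2/w.im * ‖G‖)^2 := by
          rw [hnG]; field_simp
  have h5 : 0 ≤ σ^2/w.im * ‖G‖ := by positivity
  have h6 : 0 ≤ ∫ t, |t| * ‖(w - (t:ℂ))⁻¹ - G‖ ∂μ :=
    integral_nonneg fun t => mul_nonneg (abs_nonneg t) (norm_nonneg _)
  nlinarith [e2, h4, h5, h6]

end

section

variable {μ : Measure ℝ} [IsProbabilityMeasure μ] {w : ℂ} {σ : ℝ}

lemma one_sub_wG (h2 : Integrable (fun t : ℝ => t^2) μ) (hw : 0 < w.im) :
    1 - w * cauchyG μ w = -∫ t, (t:ℂ) * (w - (t:ℂ))⁻¹ ∂μ := by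
  have e : (fun t : ℝ => (1:ℂ) - w * (w - (t:ℂ))⁻¹) = fun t : ℝ => -((t:ℂ) * (w - (t:ℂ))⁻¹) := by
    funext t
    have hne := wsub_ne hw t
    field_simp
    ring
  have h1 : ∫ t, ((1:ℂ) - w * (w - (t:ℂ))⁻¹) ∂μ = 1 - w * cauchyG μ w := by
    rw [integral_sub (integrable_const 1) ((int_X h2 hw).const_mul w),
      integral_const_mul, integral_const]
    simp only [probReal_univ, one_smul]
    rfl
  rw [← h1, e, integral_neg]

lemma Fsub_bound (hσ : 0 < σ) (h2 : Integrable (fun t : ℝ => t^2) μ)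
    (hmean : ∫ t, t ∂μ = 0) (hvar : ∫ t, t^2 ∂μ = σ^2) (hw : 0 < w.im) :
    ‖(cauchyG μ w)⁻¹ - w‖ ≤ σ^2 / w.im := by
  set G := cauchyG μ w with hG'
  have hGne : G ≠ 0 := G_ne h2 hw
  have hid : G⁻¹ - w = (1 - w * G) * G⁻¹ := by
    field_simp
  rw [hid, norm_mul, norm_inv]
  have h1 : ‖1 - w * G‖ ≤ σ^2 / w.im * ‖G‖ := by
    rw [one_sub_wG h2 hw, norm_neg]
    exact sbound hσ h2 hmean hvar hw
  have hGpos : 0 < ‖G‖ := norm_G_pos h2 hw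
  calc ‖1 - w * G‖ * ‖G‖⁻¹ ≤ (σ^2 / w.im * ‖G‖) * ‖G‖⁻¹ :=
        mul_le_mul_of_nonneg_right h1 (by positivity)
    _ = σ^2 / w.im := mul_inv_cancel_right₀ (ne_of_gt hGpos) _

lemma int_XX {w₁ w₂ : ℂ} (h2 : Integrable (fun t : ℝ => t^2) μ)
    (hw1 : 0 < w₁.im) (hw2 : 0 < w₂.im) :
    Integrable (fun t : ℝ => (w₁ - (t:ℂ))⁻¹ * (w₂ - (t:ℂ))⁻¹) μ := by
  apply integrable_dom h2 ((cont_X hw1).mul (cont_X hw2)).aestronglyMeasurable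
    (c := (w₁.im)⁻¹ * (w₂.im)⁻¹)
  intro t
  simp only [Pi.mul_apply]
  rw [norm_mul]
  have h1 := norm_X_le hw1 t
  have h2' := norm_X_le hw2 t
  have hp1 : (0:ℝ) < (w₁.im)⁻¹ := by positivity
  have hp2 : (0:ℝ) < (w₂.im)⁻¹ := by positivity
  nlinarith [norm_nonneg ((w₁ - (t:ℂ))⁻¹), norm_nonneg ((w₂ - (t:ℂ))⁻¹), sq_nonneg t,
    mul_le_mul h1 h2' (norm_nonneg _) hp1.le,
    mul_nonneg (mul_pos hp1 hp2).le (sq_nonneg t)]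

lemma G_diff {w₁ w₂ : ℂ} (h2 : Integrable (fun t : ℝ => t^2) μ)
    (hw1 : 0 < w₁.im) (hw2 : 0 < w₂.im) :
    cauchyG μ w₂ - cauchyG μ w₁
      = (w₁ - w₂) * ∫ t, (w₁ - (t:ℂ))⁻¹ * (w₂ - (t:ℂ))⁻¹ ∂μ := by
  have e : (fun t : ℝ => (w₂ - (t:ℂ))⁻¹ - (w₁ - (t:ℂ))⁻¹)
      = fun t : ℝ => (w₁ - w₂) * ((w₁ - (t:ℂ))⁻¹ * (w₂ - (t:ℂ))⁻¹) := by
    funext t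
    have h1 := wsub_ne hw1 t
    have h2' := wsub_ne hw2 t
    rw [inv_sub_inv h2' h1, show w₁ - (t:ℂ) - (w₂ - (t:ℂ)) = w₁ - w₂ by ring,
      div_eq_mul_inv, mul_inv]
    ring
  have h1 : ∫ t, ((w₂ - (t:ℂ))⁻¹ - (w₁ - (t:ℂ))⁻¹) ∂μ
      = cauchyG μ w₂ - cauchyG μ w₁ :=
    integral_sub (int_X h2 hw2) (int_X h2 hw1)
  rw [← h1, e, integral_const_mul]

lemma cov_id {w₁ w₂ : ℂ} (h2 : Integrable (fun t : ℝ => t^2) μ)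
    (hw1 : 0 < w₁.im) (hw2 : 0 < w₂.im) :
    ∫ t, ((w₁ - (t:ℂ))⁻¹ - cauchyG μ w₁) * ((w₂ - (t:ℂ))⁻¹ - cauchyG μ w₂) ∂μ
      = (∫ t, (w₁ - (t:ℂ))⁻¹ * (w₂ - (t:ℂ))⁻¹ ∂μ)
        - cauchyG μ w₁ * cauchyG μ w₂ := by
  set G₁ := cauchyG μ w₁ with hG1
  set G₂ := cauchyG μ w₂ with hG2
  have e : (fun t : ℝ => ((w₁ - (t:ℂ))⁻¹ - G₁) * ((w₂ - (t:ℂ))⁻¹ - G₂))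
      = fun t : ℝ => ((w₁ - (t:ℂ))⁻¹ * (w₂ - (t:ℂ))⁻¹
          - ((w₁ - (t:ℂ))⁻¹ * G₂ + G₁ * (w₂ - (t:ℂ))⁻¹)) + G₁ * G₂ := by
    funext t; ring
  rw [e]
  have i1 : Integrable (fun t : ℝ => (w₁ - (t:ℂ))⁻¹ * G₂ + G₁ * (w₂ - (t:ℂ))⁻¹) μ :=
    ((int_X h2 hw1).mul_const G₂).add ((int_X h2 hw2).const_mul G₁)
  have i2 : Integrable (fun t : ℝ => (w₁ - (t:ℂ))⁻¹ * (w₂ - (t:ℂ))⁻¹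
      - ((w₁ - (t:ℂ))⁻¹ * G₂ + G₁ * (w₂ - (t:ℂ))⁻¹)) μ := (int_XX h2 hw1 hw2).sub i1
  rw [integral_add i2 (integrable_const _), integral_sub (int_XX h2 hw1 hw2) i1,
    integral_add ((int_X h2 hw1).mul_const G₂) ((int_X h2 hw2).const_mul G₁),
    integral_mul_const, integral_const_mul, integral_const]
  simp only [probReal_univ, one_smul]
  rw [show (∫ a:ℝ, (w₁ - (a:ℂ))⁻¹ ∂μ) = G₁ from rfl, show (∫ a:ℝ, (w₂ - (a:ℂ))⁻¹ ∂μ) = G₂ from rfl]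
  ring

lemma lip_bound (hσ : 0 < σ) (h2 : Integrable (fun t : ℝ => t^2) μ)
    (hmean : ∫ t, t ∂μ = 0) (hvar : ∫ t, t^2 ∂μ = σ^2) {w₁ w₂ : ℂ}
    (hw1 : 0 < w₁.im) (hw2 : 0 < w₂.im) :
    ‖(w₁ - (cauchyG μ w₁)⁻¹) - (w₂ - (cauchyG μ w₂)⁻¹)‖
      ≤ σ^2/(w₁.im*w₂.im) * ‖w₁ - w₂‖ := by
  set G₁ := cauchyG μ w₁ with hG1
  set G₂ := cauchyG μ w₂ with hG2
  have hG1ne : G₁ ≠ 0 := G_ne h2 hw1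
  have hG2ne : G₂ ≠ 0 := G_ne h2 hw2
  set I := ∫ t, (w₁ - (t:ℂ))⁻¹ * (w₂ - (t:ℂ))⁻¹ ∂μ with hI
  -- the covariance bound
  have hcovb : ‖I - G₁ * G₂‖ ≤ σ^2/(w₁.im*w₂.im) * (‖G₁‖ * ‖G₂‖) := by
    rw [← cov_id h2 hw1 hw2, ← hG1, ← hG2]
    have e2 : ‖∫ t, ((w₁ - (t:ℂ))⁻¹ - G₁) * ((w₂ - (t:ℂ))⁻¹ - G₂) ∂μ‖
        ≤ ∫ t, ‖(w₁ - (t:ℂ))⁻¹ - G₁‖ * ‖(w₂ - (t:ℂ))⁻¹ - G₂‖ ∂μ := by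
      calc ‖∫ t, ((w₁ - (t:ℂ))⁻¹ - G₁) * ((w₂ - (t:ℂ))⁻¹ - G₂) ∂μ‖
          ≤ ∫ t, ‖((w₁ - (t:ℂ))⁻¹ - G₁) * ((w₂ - (t:ℂ))⁻¹ - G₂)‖ ∂μ :=
            norm_integral_le_integral_norm _
        _ = ∫ t, ‖(w₁ - (t:ℂ))⁻¹ - G₁‖ * ‖(w₂ - (t:ℂ))⁻¹ - G₂‖ ∂μ := by
            congr 1; funext t; rw [norm_mul]
    have ifh : Integrable (fun t : ℝ => ‖(w₁ - (t:ℂ))⁻¹ - G₁‖ * ‖(w₂ - (t:ℂ))⁻¹ - G₂‖) μ := by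
      set b := ((w₁.im)⁻¹ + ‖G₁‖) * ((w₂.im)⁻¹ + ‖G₂‖) with hb
      have hb0 : 0 ≤ b := by rw [hb]; positivity
      clear_value b
      apply integrable_dom h2 ?_ (c := b)
      · intro t
        have k1 : ‖(w₁ - (t:ℂ))⁻¹ - G₁‖ ≤ (w₁.im)⁻¹ + ‖G₁‖ := by
          calc ‖(w₁ - (t:ℂ))⁻¹ - G₁‖ ≤ ‖(w₁ - (t:ℂ))⁻¹‖ + ‖G₁‖ := norm_sub_le _ _
            _ ≤ _ := by linarith [norm_X_le hw1 t]
        have k2 : ‖(w₂ - (t:ℂ))⁻¹ - G₂‖ ≤ (w₂.im)⁻¹ + ‖G₂‖ := by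
          calc ‖(w₂ - (t:ℂ))⁻¹ - G₂‖ ≤ ‖(w₂ - (t:ℂ))⁻¹‖ + ‖G₂‖ := norm_sub_le _ _
            _ ≤ _ := by linarith [norm_X_le hw2 t]
        rw [Real.norm_eq_abs, abs_of_nonneg (mul_nonneg (norm_nonneg _) (norm_nonneg _))]
        have := mul_le_mul k1 k2 (norm_nonneg _) (by positivity)
        nlinarith [sq_nonneg t, this, hb0]
      · exact (((cont_X hw1).sub continuous_const).norm.mul
          ((cont_X hw2).sub continuous_const).norm).aestronglyMeasurable
    have cs := my_cs _ _ (int_normXG2 h2 hw1) (int_normXG2 h2 hw2) ifh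
    have k1 := key hσ h2 hmean hvar hw1
    have k2 := key hσ h2 hmean hvar hw2
    rw [← hG1] at k1
    rw [← hG2] at k2
    have hn1 : Complex.normSq G₁ = ‖G₁‖^2 := by rw [normsq_norm]
    have hn2 : Complex.normSq G₂ = ‖G₂‖^2 := by rw [normsq_norm]
    rw [hn1] at k1
    rw [hn2] at k2
    have h4 : (∫ t, ‖(w₁ - (t:ℂ))⁻¹ - G₁‖ * ‖(w₂ - (t:ℂ))⁻¹ - G₂‖ ∂μ)^2
        ≤ (σ^2/(w₁.im*w₂.im) * (‖G₁‖ * ‖G₂‖))^2 := by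
      have nn1 : (0:ℝ) ≤ ∫ t, ‖(w₁ - (t:ℂ))⁻¹ - G₁‖^2 ∂μ :=
        integral_nonneg fun t => sq_nonneg _
      calc (∫ t, ‖(w₁ - (t:ℂ))⁻¹ - G₁‖ * ‖(w₂ - (t:ℂ))⁻¹ - G₂‖ ∂μ)^2
          ≤ (∫ t, ‖(w₁ - (t:ℂ))⁻¹ - G₁‖^2 ∂μ) * (∫ t, ‖(w₂ - (t:ℂ))⁻¹ - G₂‖^2 ∂μ) := cs
        _ ≤ (σ^2/w₁.im^2 * ‖G₁‖^2) * (σ^2/w₂.im^2 * ‖G₂‖^2) := by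
            apply mul_le_mul k1 k2 (integral_nonneg fun t => sq_nonneg _) (by positivity)
        _ = (σ^2/(w₁.im*w₂.im) * (‖G₁‖ * ‖G₂‖))^2 := by
            field_simp
    have h5 : (0:ℝ) ≤ σ^2/(w₁.im*w₂.im) * (‖G₁‖ * ‖G₂‖) := by positivity
    have h6 : (0:ℝ) ≤ ∫ t, ‖(w₁ - (t:ℂ))⁻¹ - G₁‖ * ‖(w₂ - (t:ℂ))⁻¹ - G₂‖ ∂μ :=
      integral_nonneg fun t => mul_nonneg (norm_nonneg _) (norm_nonneg _)
    nlinarith [e2, h4, h5, h6]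
  -- algebraic identity
  have hGd : G₂ - G₁ = (w₁ - w₂) * I := G_diff h2 hw1 hw2
  have keyeq : (w₁ - G₁⁻¹) - (w₂ - G₂⁻¹) = (w₁ - w₂) * ((G₁*G₂ - I) / (G₁*G₂)) := by
    have e1 : G₁ * G₁⁻¹ = 1 := mul_inv_cancel₀ hG1ne
    have e2 : G₂ * G₂⁻¹ = 1 := mul_inv_cancel₀ hG2ne
    have hne : G₁*G₂ ≠ 0 := mul_ne_zero hG1ne hG2ne
    rw [← mul_div_assoc, eq_div_iff hne]
    linear_combination (-G₂)*e1 + G₁*e2 - hGd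
  rw [keyeq, norm_mul, norm_div, norm_mul]
  have hn1 : 0 < ‖G₁‖ := norm_G_pos h2 hw1
  have hn2 : 0 < ‖G₂‖ := norm_G_pos h2 hw2
  have hb2 : ‖G₁*G₂ - I‖ ≤ σ^2/(w₁.im*w₂.im) * (‖G₁‖ * ‖G₂‖) := by
    rw [show G₁*G₂ - I = -(I - G₁*G₂) by ring, norm_neg]
    exact hcovb
  calc ‖w₁ - w₂‖ * (‖G₁*G₂ - I‖ / (‖G₁‖ * ‖G₂‖))
      ≤ ‖w₁ - w₂‖ * ((σ^2/(w₁.im*w₂.im) * (‖G₁‖ * ‖G₂‖)) / (‖G₁‖ * ‖G₂‖)) := by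
        apply mul_le_mul_of_nonneg_left ?_ (norm_nonneg _)
        apply div_le_div_of_nonneg_right ?_ (by positivity)
        exact hb2
    _ = σ^2/(w₁.im*w₂.im) * ‖w₁ - w₂‖ := by
        have hnn : (‖G₁‖*‖G₂‖) ≠ 0 := by positivity
        rw [mul_div_cancel_right₀ _ hnn]; ring

end

section

variable {μ : Measure ℝ} [IsProbabilityMeasure μ] {σ : ℝ}

lemma main_exists (hσ : 0 < σ) (h2 : Integrable (fun t : ℝ => t^2) μ)
    (hmean : ∫ t, t ∂μ = 0) (hvar : ∫ t, t^2 ∂μ = σ^2) (z : ℂ) (hz : 2*σ < z.im) :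
    ∃ w : ℂ, σ < w.im ∧ (cauchyG μ w)⁻¹ = z
      ∧ ‖w - z‖ ≤ 2*σ^2/z.im := by
  set y := z.im with hy'
  have hy : 0 < y := by nlinarith
  set ρ := 2*σ^2/y with hρ
  have hρpos : 0 < ρ := by rw [hρ]; positivity
  have hρy : ρ * y = 2*σ^2 := by rw [hρ]; field_simp
  have hρσ : ρ < σ := by nlinarith
  have hv₀ : σ < y - ρ := by nlinarith
  have him : ∀ w ∈ closedBall z ρ, y - ρ ≤ w.im := by
    intro w hw
    have h1 : ‖w - z‖ ≤ ρ := by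
      rw [← Complex.dist_eq]; exact mem_closedBall.mp hw
    have h2' : |(w - z).im| ≤ ‖w - z‖ := Complex.abs_im_le_norm _
    rw [Complex.sub_im] at h2'
    have := abs_le.mp (le_trans h2' h1)
    linarith [this.1]
  have hwpos : ∀ w ∈ closedBall z ρ, 0 < w.im := by
    intro w hw
    have := him w hw
    nlinarith
  set Φ : ℂ → ℂ := fun w => z + w - (cauchyG μ w)⁻¹ with hΦ
  have hmaps : MapsTo Φ (closedBall z ρ) (closedBall z ρ) := by
    intro w hw
    have hwim := hwpos w hw
    have h1 : ‖(cauchyG μ w)⁻¹ - w‖ ≤ σ^2 / w.im := Fsub_bound hσ h2 hmean hvar hwim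
    have h2' : σ^2 / w.im ≤ ρ := by
      rw [div_le_iff₀ hwim]
      have := him w hw
      nlinarith
    rw [mem_closedBall, dist_eq_norm, hΦ]
    calc ‖z + w - (cauchyG μ w)⁻¹ - z‖ = ‖(cauchyG μ w)⁻¹ - w‖ := by
          rw [show z + w - (cauchyG μ w)⁻¹ - z = -((cauchyG μ w)⁻¹ - w) by ring,
            norm_neg]
      _ ≤ ρ := le_trans h1 h2'
  have hKnn : 0 ≤ σ^2/(y-ρ)^2 := by positivity
  set K : NNReal := ⟨σ^2/(y-ρ)^2, hKnn⟩ with hK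
  have hK1 : K < 1 := by
    rw [← NNReal.coe_lt_coe]
    show σ^2/(y-ρ)^2 < 1
    rw [div_lt_one (by nlinarith)]
    nlinarith
  have hlip : LipschitzOnWith K Φ (closedBall z ρ) := by
    apply LipschitzOnWith.of_dist_le_mul
    intro w₁ hw₁ w₂ hw₂
    have h1 := hwpos w₁ hw₁
    have h2' := hwpos w₂ hw₂
    have hl := lip_bound hσ h2 hmean hvar h1 h2'
    have e : dist (Φ w₁) (Φ w₂) = ‖(w₁ - (cauchyG μ w₁)⁻¹) - (w₂ - (cauchyG μ w₂)⁻¹)‖ := by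
      rw [dist_eq_norm, hΦ]
      congr 1
      ring
    rw [e, dist_eq_norm]
    have hcoef : σ^2/(w₁.im*w₂.im) ≤ σ^2/(y-ρ)^2 := by
      apply div_le_div_of_nonneg_left (by positivity) (by nlinarith)
      have k1 := him w₁ hw₁
      have k2 := him w₂ hw₂
      nlinarith
    calc ‖(w₁ - (cauchyG μ w₁)⁻¹) - (w₂ - (cauchyG μ w₂)⁻¹)‖
        ≤ σ^2/(w₁.im*w₂.im) * ‖w₁ - w₂‖ := hl
      _ ≤ σ^2/(y-ρ)^2 * ‖w₁ - w₂‖ := mul_le_mul_of_nonneg_right hcoef (norm_nonneg _)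
      _ = (K : ℝ) * ‖w₁ - w₂‖ := rfl
  have hcontr : ContractingWith K (hmaps.restrict Φ _ _) :=
    ⟨hK1, hlip.mapsToRestrict hmaps⟩
  obtain ⟨H, Hmem, Hfix, -, -⟩ := ContractingWith.exists_fixedPoint'
    (Metric.isClosed_closedBall.isComplete) hmaps hcontr (Metric.mem_closedBall_self hρpos.le)
    (edist_ne_top _ _)
  refine ⟨H, ?_, ?_, ?_⟩
  · have := him H Hmem
    nlinarith
  · have hfix : Φ H = H := Hfix
    rw [hΦ] at hfix
    simp only at hfix
    linear_combination -hfix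
  · have : dist H z ≤ ρ := mem_closedBall.mp Hmem
    rw [Complex.dist_eq] at this
    exact this

end

end StmtAux

theorem stmt12 (μ : Measure ℝ) [IsProbabilityMeasure μ] (σ : ℝ) (hσ : 0 < σ)
    (h2 : Integrable (fun t => t ^ 2) μ)
    (hmean : ∫ t, t ∂μ = 0) (hvar : ∫ t, t ^ 2 ∂μ = σ ^ 2) :
    ∃ H : ℂ → ℂ, ∀ z : ℂ, 2 * σ < z.im →
      σ < (H z).im ∧ Frec μ (H z) = z ∧
      ‖H z - z‖ ≤ 2 * σ ^ 2 / z.im := by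
  have h2' : Integrable (fun t : ℝ => t^2) μ := h2
  refine ⟨fun z => if h : 2*σ < z.im then
    Classical.choose (StmtAux.main_exists hσ h2' hmean hvar z h) else 0, fun z hz => ?_⟩
  simp only [dif_pos hz]
  obtain ⟨p1, p2, p3⟩ := Classical.choose_spec (StmtAux.main_exists hσ h2' hmean hvar z hz)
  refine ⟨p1, ?_, ?_⟩
  · rw [Frec]; exact p2
  · exact p3
end

section
/- Let Ω = {z ∈ ℂ⁺ : |z| < K, Im z > c} be a truncated disk with 0 < c < K. Then the image {z + 1/z : z ∈ Ω} is bounded away from the real axis outside a compact interval: there exist δ > 0 and η > 0 such that every w = z + 1/z with z ∈ Ω and |Im w| < η satisfies Re w ∈ [-2 + δ, 2 - δ] — in fact dist(z + 1/z, ℝ \ [-2+δ, 2-δ]) ≥ η for all z ∈ Ω. -/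
open MeasureTheory Filter Topology

lemma key17 (z α β : ℂ) (hz : z ≠ 0) (hab : α * β = 1) :
    ‖z + z⁻¹ - (α + β)‖ =
      ‖z - α‖ * ‖z - β‖ / ‖z‖ := by
  rw [← norm_mul, ← norm_div]
  congr 1
  field_simp
  ring_nf
  linear_combination -hab

lemma imlb17 (w : ℂ) (a : ℝ) (ha : 0 ≤ a) (h : a ≤ w.im) : a ≤ ‖w‖ :=
  le_trans (le_trans h (le_abs_self _)) (Complex.abs_im_le_norm w)

theorem stmt17 (c K : ℝ) (hc : 0 < c) (hcK : c < K) :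
    ∃ δ > 0, ∃ η > 0, ∀ z : ℂ, c < z.im → ‖z‖ < K →
      ∀ x : ℝ, x ∉ Set.Icc (-2 + δ) (2 - δ) →
        η ≤ ‖z + z⁻¹ - (x : ℂ)‖ := by
  have hK : 0 < K := hc.trans hcK
  refine ⟨min (c^2/4) 1, lt_min (div_pos (pow_pos hc 2) (by norm_num)) one_pos, c^2/(2*K), div_pos (pow_pos hc 2) (by linarith), ?_⟩
  intro z hzim hzK x hx
  have hz : z ≠ 0 := by
    intro h; rw [h] at hzim; simp at hzim; linarith
  have hzabs : 0 < ‖z‖ := norm_pos_iff.mpr hz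
  by_cases hx4 : 4 ≤ x^2
  · -- real roots
    set s := Real.sqrt (x^2 - 4) with hs
    have hs2 : s^2 = x^2 - 4 := Real.sq_sqrt (by linarith)
    have hcast : (x : ℂ) = (((x+s)/2 : ℝ) : ℂ) + (((x-s)/2 : ℝ) : ℂ) := by
      push_cast; ring
    have habR : ((x+s)/2) * ((x-s)/2) = (1:ℝ) := by nlinarith [hs2]
    have hab : (((x+s)/2 : ℝ) : ℂ) * (((x-s)/2 : ℝ) : ℂ) = 1 := by exact_mod_cast habR
    rw [hcast, key17 z _ _ hz hab]
    have h1 : c ≤ ‖z - (((x+s)/2 : ℝ) : ℂ)‖ := by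
      apply imlb17 _ _ hc.le
      simp [Complex.sub_im, Complex.ofReal_im]
      linarith
    have h2 : c ≤ ‖z - (((x-s)/2 : ℝ) : ℂ)‖ := by
      apply imlb17 _ _ hc.le
      simp [Complex.sub_im, Complex.ofReal_im]
      linarith
    rw [le_div_iff₀ hzabs]
    calc c^2/(2*K) * ‖z‖ ≤ c^2/(2*K) * K := by
          apply mul_le_mul_of_nonneg_left hzK.le (by positivity)
      _ = c^2/2 := by field_simp
      _ ≤ c * c := by nlinarith
      _ ≤ _ := mul_le_mul h1 h2 hc.le (by positivity)
  · -- complex roots on unit circle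
    push_neg at hx4
    set s := Real.sqrt (4 - x^2) with hs
    have hs0 : 0 ≤ s := Real.sqrt_nonneg _
    have hs2 : s^2 = 4 - x^2 := Real.sq_sqrt (by linarith)
    -- from hx : |x| > 2 - δ, so s < c
    have hδ1 : min (c^2/4) 1 ≤ c^2/4 := min_le_left _ _
    have hδ2 : min (c^2/4) 1 ≤ 1 := min_le_right _ _
    have hxabs : 4 - x^2 < c^2 := by
      simp only [Set.mem_Icc, not_and_or, not_le] at hx
      rcases hx with h | h
      · nlinarith [abs_nonneg x]
      · nlinarith
    have hsc : s < c := by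
      nlinarith [Real.sq_sqrt (by linarith : (0:ℝ) ≤ 4 - x^2)]
    set α : ℂ := (x + s*Complex.I)/2 with hα
    set β : ℂ := (x - s*Complex.I)/2 with hβ
    have hcast : (x : ℂ) = α + β := by rw [hα, hβ]; ring
    have hab : α * β = 1 := by
      rw [hα, hβ]
      have h4 : (s:ℂ)^2 = 4 - (x:ℂ)^2 := by exact_mod_cast hs2
      field_simp
      linear_combination (-(s:ℂ)^2) * Complex.I_sq + h4
    rw [hcast, key17 z _ _ hz hab]
    have hαim : α.im = s/2 := by simp [hα, Complex.div_im, Complex.add_im, Complex.mul_im]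
    have hβim : β.im = -(s/2) := by
      simp [hβ, Complex.div_im, Complex.sub_im, Complex.mul_im]; ring
    have h1 : c/2 ≤ ‖z - α‖ := by
      apply imlb17 _ _ (by positivity)
      rw [Complex.sub_im, hαim]; linarith
    have h2 : c ≤ ‖z - β‖ := by
      apply imlb17 _ _ hc.le
      rw [Complex.sub_im, hβim]; linarith
    rw [le_div_iff₀ hzabs]
    calc c^2/(2*K) * ‖z‖ ≤ c^2/(2*K) * K := by
          apply mul_le_mul_of_nonneg_left hzK.le (by positivity)
      _ = (c/2) * c := by field_simp
      _ ≤ _ := mul_le_mul h1 h2 hc.le (by positivity)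
end

section
/- Let μ be a ⊞-infinitely divisible probability measure on ℝ with mean 0 and variance 1 that is not a Dirac measure, and let μ_n be the distribution of the normalized free sum n^{-1/2}(X₁+⋯+Xₙ) of free copies. Then there exists C > 0 such that for all sufficiently large n, |F_{μ_n}(z)| ≥ C for every z in the upper half-plane, where F_{μ_n} = 1/G_{μ_n}. -/
open MeasureTheory Filter Topology

lemma integrable_inv_sub (ν : Measure ℝ) [IsFiniteMeasure ν] {u : ℂ} (hu : u.im ≠ 0) :
    Integrable (fun t : ℝ => (u - (t : ℂ))⁻¹) ν := by
  have hne : ∀ t : ℝ, u - (t : ℂ) ≠ 0 := by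
    intro t h
    apply hu
    have := congrArg Complex.im h
    simpa using this
  refine Integrable.mono' (integrable_const (|u.im|⁻¹)) ?_ ?_
  · exact (Continuous.inv₀ (by continuity) hne).aestronglyMeasurable
  · filter_upwards with t
    rw [norm_inv]
    have h1 : |u.im| ≤ ‖u - t‖ := by
      have := Complex.abs_im_le_norm (u - t)
      simpa using this
    exact inv_anti₀ (abs_pos.2 hu) h1

lemma frec_im_pos (μ : Measure ℝ) [IsProbabilityMeasure μ] {z : ℂ} (hz : 0 < z.im) :
    0 < (Frec μ z).im := by
  have hne : ∀ t : ℝ, z - (t : ℂ) ≠ 0 := by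
    intro t h
    have := congrArg Complex.im h
    simp at this
    simp [this] at hz
  have hint : Integrable (fun t : ℝ => (z - (t : ℂ))⁻¹) μ :=
    integrable_inv_sub μ (by positivity)
  -- imaginary part of cauchyG is negative
  have him : (cauchyG μ z).im = ∫ t : ℝ, ((z - (t : ℂ))⁻¹).im ∂μ := by
    have h := integral_im (μ := μ) (f := fun t : ℝ => (z - (t : ℂ))⁻¹) hint
    simpa [cauchyG] using h.symm
  have hptw : ∀ t : ℝ, ((z - (t : ℂ))⁻¹).im = -(z.im / Complex.normSq (z - t)) := by
    intro t
    rw [Complex.inv_im]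
    simp [neg_div]
  have hpos : 0 < ∫ t : ℝ, z.im / Complex.normSq (z - (t : ℂ)) ∂μ := by
    have hintp : Integrable (fun t : ℝ => z.im / Complex.normSq (z - (t : ℂ))) μ := by
      have : (fun t : ℝ => z.im / Complex.normSq (z - (t : ℂ)))
          = fun t : ℝ => -((z - (t : ℂ))⁻¹).im := by
        funext t; rw [hptw t]; ring
      rw [this]
      exact hint.im.neg
    rw [integral_pos_iff_support_of_nonneg]
    · have : Function.support (fun t : ℝ => z.im / Complex.normSq (z - (t : ℂ))) = Set.univ := by
        ext t
        simp only [Function.mem_support, Set.mem_univ, iff_true]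
        have : 0 < Complex.normSq (z - t) := Complex.normSq_pos.2 (hne t)
        positivity
      rw [this]
      simp
    · intro t
      have : 0 < Complex.normSq (z - t) := Complex.normSq_pos.2 (hne t)
      positivity
    · exact hintp
  have hGneg : (cauchyG μ z).im < 0 := by
    rw [him]
    have : (∫ t : ℝ, ((z - (t : ℂ))⁻¹).im ∂μ)
        = -∫ t : ℝ, z.im / Complex.normSq (z - (t : ℂ)) ∂μ := by
      rw [← integral_neg]
      congr 1; funext t; rw [hptw t]
    rw [this]
    linarith
  rw [Frec, Complex.inv_im]
  have hGn : Complex.normSq (cauchyG μ z) > 0 :=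
    Complex.normSq_pos.2 (by intro h; rw [h] at hGneg; simp at hGneg)
  have := neg_pos.2 hGneg
  positivity

set_option maxHeartbeats 1600000 in
theorem stmt18 (μ : Measure ℝ) [IsProbabilityMeasure μ]
    (h2 : Integrable (fun t => t ^ 2) μ)
    (hmean : ∫ t, t ∂μ = 0) (hvar : ∫ t, t ^ 2 ∂μ = 1)
    (hnd : ¬ ∃ a : ℝ, μ = Measure.dirac a)
    (φ : ℂ → ℂ) (α : ℝ) (ν : Measure ℝ) [IsFiniteMeasure ν]
    (a b : ℝ) (hab : a ≤ b) (hν : 0 < (ν (Set.Icc a b)).toReal)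
    (hrep : ∀ w : ℂ, 0 < w.im → φ w = α + ∫ t, (1 + (t : ℂ) * w) / (w - (t : ℂ)) ∂ν)
    (hsubμ : ∀ z : ℂ, 0 < z.im → Frec μ z + φ (Frec μ z) = z)
    (μs : ℕ → Measure ℝ) (hprob : ∀ n, IsProbabilityMeasure (μs n))
    (hsubn : ∀ n : ℕ, 1 ≤ n → ∀ z : ℂ, 0 < z.im →
        Frec (μs n) z + (Real.sqrt n : ℂ) * φ ((Real.sqrt n : ℂ) * Frec (μs n) z) = z) :
    ∃ C > 0, ∃ N : ℕ, ∀ n ≥ N, ∀ z : ℂ, 0 < z.im →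
      C ≤ ‖Frec (μs n) z‖ := by
  set v : ℝ := (ν (Set.Icc a b)).toReal with hv
  set K : ℝ := 2 * (a ^ 2 + b ^ 2) with hK
  have hK0 : 0 ≤ K := by rw [hK]; positivity
  clear_value K v
  refine ⟨Real.sqrt (v / 8), Real.sqrt_pos.2 (by linarith), ⌈4 * K / (3 * v)⌉₊ + 1, ?_⟩
  intro n hn z hz
  haveI := hprob n
  have hn1 : 1 ≤ n := le_trans (Nat.le_add_left 1 _) hn
  have hnR : (1 : ℝ) ≤ (n : ℝ) := by exact_mod_cast hn1
  by_contra hcon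
  push_neg at hcon
  set w : ℂ := Frec (μs n) z with hw
  have hwim : 0 < w.im := frec_im_pos (μs n) hz
  have hsq : Real.sqrt n * Real.sqrt n = (n : ℝ) := Real.mul_self_sqrt (by positivity)
  have hsqpos : 0 < Real.sqrt n := Real.sqrt_pos.2 (by linarith)
  set u : ℂ := (Real.sqrt n : ℂ) * w with hu
  have huim : u.im = Real.sqrt n * w.im := by
    rw [hu]; simp [Complex.mul_im]
  have huim0 : 0 < u.im := by rw [huim]; positivity
  have hkey := hsubn n hn1 z hz
  rw [← hw, ← hu] at hkey
  clear_value w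
  have hne : ∀ t : ℝ, u - (t : ℂ) ≠ 0 := by
    intro t h
    have := congrArg Complex.im h
    simp at this
    simp [this] at huim0
  have hnsne : ∀ t : ℝ, Complex.normSq (u - (t : ℂ)) ≠ 0 :=
    fun t => (Complex.normSq_pos.2 (hne t)).ne'
  -- integrability of the integrand in φ
  have hgeq : ∀ t : ℝ, (1 + (t : ℂ) * u) / (u - (t : ℂ))
      = -u + (1 + u ^ 2) * (u - (t : ℂ))⁻¹ := by
    intro t
    field_simp [hne t]
    ring
  have hgint : Integrable (fun t : ℝ => (1 + (t : ℂ) * u) / (u - (t : ℂ))) ν := by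
    have : (fun t : ℝ => (1 + (t : ℂ) * u) / (u - (t : ℂ)))
        = fun t : ℝ => -u + (1 + u ^ 2) * (u - (t : ℂ))⁻¹ := funext hgeq
    rw [this]
    exact (integrable_const _).add ((integrable_inv_sub ν (ne_of_gt huim0)).const_mul _)
  -- pointwise imaginary part
  have hgim : ∀ t : ℝ, ((1 + (t : ℂ) * u) / (u - (t : ℂ))).im
      = -((1 + t ^ 2) * u.im / Complex.normSq (u - (t : ℂ))) := by
    intro t
    rw [Complex.div_im]
    simp only [Complex.add_im, Complex.add_re, Complex.one_im, Complex.one_re,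
      Complex.mul_im, Complex.mul_re, Complex.ofReal_re, Complex.ofReal_im,
      Complex.sub_re, Complex.sub_im]
    field_simp
    ring
  -- the function I integrates
  set f : ℝ → ℝ := fun t => (1 + t ^ 2) / Complex.normSq (u - (t : ℂ)) with hf
  have hfnonneg : ∀ t : ℝ, 0 ≤ f t := by
    intro t
    have h1 : 0 < Complex.normSq (u - (t : ℂ)) := Complex.normSq_pos.2 (hne t)
    have h2 : (0:ℝ) ≤ 1 + t ^ 2 := by positivity
    rw [hf]
    positivity
  have hfint : Integrable f ν := by
    have : f = fun t : ℝ => (-((1 + (t : ℂ) * u) / (u - (t : ℂ))).im) * (u.im)⁻¹ := by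
      funext t
      rw [hgim t, hf, neg_neg, div_mul_eq_mul_div, mul_assoc,
        mul_inv_cancel₀ (ne_of_gt huim0), mul_one]
    rw [this]
    exact (hgint.im.neg).mul_const _
  set I : ℝ := ∫ t, f t ∂ν with hI
  clear_value f I
  -- take imaginary parts in the subordination equation
  rw [hrep u huim0] at hkey
  have him := congrArg Complex.im hkey
  have hintim : (∫ t : ℝ, (1 + (t : ℂ) * u) / (u - (t : ℂ)) ∂ν).im = -(u.im * I) := by
    have h := integral_im (μ := ν) (f := fun t : ℝ => (1 + (t : ℂ) * u) / (u - (t : ℂ))) hgint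
    rw [← show (∫ t : ℝ, ((1 + (t : ℂ) * u) / (u - (t : ℂ))).im ∂ν)
        = (∫ t : ℝ, (1 + (t : ℂ) * u) / (u - (t : ℂ)) ∂ν).im from h]
    have heq : (fun t : ℝ => ((1 + (t : ℂ) * u) / (u - (t : ℂ))).im)
        = fun t : ℝ => -(u.im * f t) := by
      funext t
      rw [hgim t, hf]
      ring
    rw [heq, integral_neg, integral_const_mul, ← hI]
  have him2 : z.im = w.im - (n : ℝ) * w.im * I := by
    simp only [Complex.add_im, Complex.mul_im, Complex.ofReal_re, Complex.ofReal_im,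
      Complex.add_re] at him
    rw [hintim] at him
    rw [huim] at him
    linear_combination (-1 : ℝ) * him - w.im * I * hsq
  have hnI : (n : ℝ) * I < 1 := by
    by_contra hcI
    push_neg at hcI
    have h0 : 0 ≤ w.im * ((n : ℝ) * I - 1) := mul_nonneg hwim.le (by linarith)
    nlinarith [him2, hz]
  -- lower bound on I
  have hnsu : Complex.normSq u = (n : ℝ) * Complex.normSq w := by
    rw [hu, Complex.normSq_mul, Complex.normSq_ofReal, hsq]
  clear_value u
  have hwsq : Complex.normSq w < v / 8 := by
    rw [Complex.normSq_eq_norm_sq]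
    have h0 : (0:ℝ) ≤ ‖w‖ := norm_nonneg w
    have h1 := Real.sq_sqrt (show (0:ℝ) ≤ v / 8 by linarith)
    nlinarith [hcon]
  have hd : 0 < (n : ℝ) * v / 4 + K := by nlinarith
  have hlb : ∀ t ∈ Set.Icc a b, ((n : ℝ) * v / 4 + K)⁻¹ ≤ f t := by
    intro t ht
    obtain ⟨hta, htb⟩ := ht
    have ht2 : t ^ 2 ≤ a ^ 2 + b ^ 2 := by
      rcases le_or_gt 0 t with h | h
      · nlinarith
      · nlinarith
    have hns : Complex.normSq (u - (t : ℂ)) ≤ (n : ℝ) * v / 4 + K := by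
      have hexp : Complex.normSq (u - (t : ℂ)) = (u.re - t) ^ 2 + u.im ^ 2 := by
        rw [Complex.normSq_apply, Complex.sub_re, Complex.sub_im, Complex.ofReal_re,
          Complex.ofReal_im]
        ring
      have h2 : Complex.normSq (u - (t : ℂ)) ≤ 2 * Complex.normSq u + 2 * t ^ 2 := by
        rw [hexp, Complex.normSq_apply]
        nlinarith [sq_nonneg (u.re + t)]
      have h3 : 2 * Complex.normSq u < (n : ℝ) * v / 4 := by
        rw [hnsu]; nlinarith
      linarith [hK ▸ le_refl K]
    have hns0 : 0 < Complex.normSq (u - (t : ℂ)) := Complex.normSq_pos.2 (hne t)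
    rw [hf]
    calc ((n : ℝ) * v / 4 + K)⁻¹ ≤ (Complex.normSq (u - (t : ℂ)))⁻¹ := inv_anti₀ hns0 hns
      _ = 1 / Complex.normSq (u - (t : ℂ)) := (one_div _).symm
      _ ≤ (1 + t ^ 2) / Complex.normSq (u - (t : ℂ)) :=
          (div_le_div_iff_of_pos_right hns0).2 (by linarith [sq_nonneg t])
  have hIlb : ((n : ℝ) * v / 4 + K)⁻¹ * v ≤ I := by
    have h1 := setIntegral_ge_of_const_le (μ := ν) (s := Set.Icc a b) (f := f)
      (c := ((n : ℝ) * v / 4 + K)⁻¹) measurableSet_Icc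
      (measure_ne_top ν _) hlb hfint.integrableOn
    have h2 := setIntegral_le_integral (s := Set.Icc a b) hfint (Filter.Eventually.of_forall hfnonneg)
    rw [Measure.real, ← hv, smul_eq_mul] at h1
    rw [← hI] at h2
    linarith
  have hnN : 4 * K / (3 * v) < (n : ℝ) := by
    have h1 : (⌈4 * K / (3 * v)⌉₊ : ℝ) < (n : ℝ) := by
      have : ⌈4 * K / (3 * v)⌉₊ < n := lt_of_lt_of_le (Nat.lt_succ_self _) hn
      exact_mod_cast this
    exact lt_of_le_of_lt (Nat.le_ceil _) h1
  have h4K : 4 * K < (n : ℝ) * (3 * v) := by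
    have h3v : 0 < 3 * v := by linarith
    exact (div_lt_iff₀ h3v).1 hnN
  have hfin : (n : ℝ) * v < (n : ℝ) * v / 4 + K := by
    have hle : (n : ℝ) * (((n : ℝ) * v / 4 + K)⁻¹ * v) ≤ (n : ℝ) * I :=
      mul_le_mul_of_nonneg_left hIlb (by linarith)
    have h4 : (n : ℝ) * v / ((n : ℝ) * v / 4 + K) < 1 := by
      have : (n : ℝ) * v / ((n : ℝ) * v / 4 + K)
          = (n : ℝ) * (((n : ℝ) * v / 4 + K)⁻¹ * v) := by
        rw [div_eq_mul_inv]; ring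
      rw [this]
      exact lt_of_le_of_lt hle hnI
    exact (div_lt_one hd).1 h4
  linarith
end
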